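/- arXiv:math/0508312 — 10 statements merged into one kernel-verified Lean document; each statement's English description precedes it below -/
import Mathlib

section
/- Let X be a separable Banach space (over ℝ or ℂ) and T : X → X a continuous linear operator. Suppose there exist dense subsets Y and Z of X, a strictly increasing sequence (n_k) of positive integers, and for each k a map S_k : Z → X such that: (1) T^{n_k} y → 0 as k → ∞ for every y ∈ Y, and (2) for every z ∈ Z, S_k z → 0 and T^{n_k} (S_k z) → z as k → ∞. Then T is hypercyclic, i.e. there exists x ∈ X such that the orbit {T^n x : n ≥ 0} is dense in X. -/
/-- The Hypercyclicity Criterion. -/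
theorem hypercyclicity_criterion
    {𝕜 : Type*} [RCLike 𝕜]
    {X : Type*} [NormedAddCommGroup X] [NormedSpace 𝕜 X] [CompleteSpace X]
    [TopologicalSpace.SeparableSpace X]
    (T : X →L[𝕜] X) (Y Z : Set X) (hY : Dense Y) (hZ : Dense Z)
    (n : ℕ → ℕ) (hmono : StrictMono n) (hpos : ∀ k, 0 < n k)
    (S : ℕ → X → X)
    (h1 : ∀ y ∈ Y, Filter.Tendsto (fun k => (T ^ n k) y) Filter.atTop (nhds 0))
    (h2 : ∀ z ∈ Z, Filter.Tendsto (fun k => S k z) Filter.atTop (nhds 0) ∧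
      Filter.Tendsto (fun k => (T ^ n k) (S k z)) Filter.atTop (nhds z)) :
    ∃ x : X, Dense (Set.range fun m : ℕ => (T ^ m) x) := by
  -- Topological transitivity
  have trans : ∀ U V : Set X, IsOpen U → IsOpen V → U.Nonempty → V.Nonempty →
      ∃ m : ℕ, ∃ u ∈ U, (T ^ m) u ∈ V := by
    intro U V hU hV hUne hVne
    obtain ⟨y, hyU, hyY⟩ := hY.inter_open_nonempty U hU hUne
    obtain ⟨z, hzV, hzZ⟩ := hZ.inter_open_nonempty V hV hVne
    obtain ⟨hS0, hSz⟩ := h2 z hzZ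
    have hx : Filter.Tendsto (fun k => y + S k z) Filter.atTop (nhds y) := by
      simpa using (tendsto_const_nhds.add hS0)
    have hTx : Filter.Tendsto (fun k => (T ^ n k) (y + S k z)) Filter.atTop (nhds z) := by
      have : ∀ k, (T ^ n k) (y + S k z) = (T ^ n k) y + (T ^ n k) (S k z) := fun k =>
        map_add _ _ _
      simp only [this]
      simpa using (h1 y hyY).add hSz
    have e1 : ∀ᶠ k in Filter.atTop, y + S k z ∈ U := hx.eventually (hU.mem_nhds hyU)
    have e2 : ∀ᶠ k in Filter.atTop, (T ^ n k) (y + S k z) ∈ V := hTx.eventually (hV.mem_nhds hzV)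
    obtain ⟨k, hk1, hk2⟩ := (e1.and e2).exists
    exact ⟨n k, y + S k z, hk1, hk2⟩
  obtain ⟨b, hbc, hbne, hb⟩ := TopologicalSpace.exists_countable_basis X
  set G : Set X → Set X := fun V => ⋃ m : ℕ, (fun x => (T ^ m) x) ⁻¹' V with hG
  have hGopen : ∀ V ∈ b, IsOpen (G V) := fun V hV =>
    isOpen_iUnion fun m => (hb.isOpen hV).preimage (T ^ m).continuous
  have hGdense : ∀ V ∈ b, Dense (G V) := by
    intro V hV
    rw [dense_iff_inter_open]
    intro U hU hUne
    have hVne : V.Nonempty := Set.nonempty_iff_ne_empty.2 fun h => hbne (h ▸ hV)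
    obtain ⟨m, u, huU, huV⟩ := trans U V hU (hb.isOpen hV) hUne hVne
    exact ⟨u, huU, Set.mem_iUnion.2 ⟨m, huV⟩⟩
  have hDense : Dense (⋂₀ (G '' b)) :=
    dense_sInter_of_isOpen (by rwa [Set.forall_mem_image])
      (hbc.image _) (by rwa [Set.forall_mem_image])
  obtain ⟨x, hx⟩ := hDense.nonempty
  refine ⟨x, dense_iff_inter_open.2 fun U hU hUne => ?_⟩
  obtain ⟨u, hu⟩ := hUne
  obtain ⟨V, hVb, huV, hVU⟩ := hb.exists_subset_of_mem_open hu hU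
  have hxG : x ∈ G V := hx _ (Set.mem_image_of_mem _ hVb)
  obtain ⟨m, hm⟩ := Set.mem_iUnion.1 hxG
  exact ⟨(T ^ m) x, hVU hm, ⟨m, rfl⟩⟩
end

section
/- Let X be a separable Banach space and T : X → X a continuous linear operator. Suppose that for every pair U, V of nonempty open subsets of X and every neighborhood W of zero in X, there are infinitely many positive integers n such that both T^n(U) ∩ W ≠ ∅ and T^n(W) ∩ V ≠ ∅. Then T is hypercyclic. -/
/-- a sufficient condition for hypercyclicity (Godefroy–Shapiro). -/
theorem hypercyclic_of_infinitely_many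
    {𝕜 : Type*} [RCLike 𝕜]
    {X : Type*} [NormedAddCommGroup X] [NormedSpace 𝕜 X] [CompleteSpace X]
    [TopologicalSpace.SeparableSpace X]
    (T : X →L[𝕜] X)
    (h : ∀ U V W : Set X, IsOpen U → IsOpen V → U.Nonempty → V.Nonempty →
      W ∈ nhds (0 : X) →
      {n : ℕ | 0 < n ∧ ((T ^ n) '' U ∩ W).Nonempty ∧
        ((T ^ n) '' W ∩ V).Nonempty}.Infinite) :
    ∃ x : X, Dense (Set.range fun m : ℕ => (T ^ m) x) := by
  -- Step 1: topological transitivity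
  have trans : ∀ U V : Set X, IsOpen U → IsOpen V → U.Nonempty → V.Nonempty →
      ∃ n : ℕ, (U ∩ (T ^ n) ⁻¹' V).Nonempty := by
    intro U V hU hV ⟨u0, hu0⟩ ⟨v0, hv0⟩
    obtain ⟨ε, hε, hUb⟩ := Metric.isOpen_iff.1 hU u0 hu0
    obtain ⟨δ, hδ, hVb⟩ := Metric.isOpen_iff.1 hV v0 hv0
    set r := min ε δ / 2 with hr
    have hrpos : 0 < r := by positivity
    have hinf := h (Metric.ball u0 r) (Metric.ball v0 r) (Metric.ball 0 r)
      Metric.isOpen_ball Metric.isOpen_ball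
      ⟨u0, Metric.mem_ball_self hrpos⟩ ⟨v0, Metric.mem_ball_self hrpos⟩
      (Metric.ball_mem_nhds 0 hrpos)
    obtain ⟨n, hn⟩ := hinf.nonempty
    obtain ⟨-, ⟨y, ⟨a, ha, hay⟩, hyW⟩, ⟨z, ⟨w, hw, hwz⟩, hzV⟩⟩ := hn
    refine ⟨n, a + w, ?_, ?_⟩
    · apply hUb
      have h1 : dist a u0 < r := ha
      have h2 : ‖w‖ < r := by simpa [Metric.mem_ball, dist_eq_norm] using hw
      have : dist (a + w) u0 ≤ dist a u0 + ‖w‖ := by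
        simpa [dist_eq_norm, add_sub_right_comm] using norm_add_le (a - u0) w
      have : dist (a + w) u0 < r + r := lt_of_le_of_lt this (by linarith)
      refine Metric.mem_ball.2 (lt_of_lt_of_le this ?_)
      have : r + r = min ε δ := by rw [hr]; ring
      rw [this]; exact min_le_left _ _
    · apply hVb
      have hTn : (T ^ n) (a + w) = y + z := by rw [map_add, hay, hwz]
      have h1 : ‖y‖ < r := by
        subst hay; simpa [Metric.mem_ball, dist_eq_norm] using hyW
      have h2 : dist z v0 < r := hzV
      have : dist ((T ^ n) (a + w)) v0 ≤ ‖y‖ + dist z v0 := by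
        rw [hTn]
        simpa [dist_eq_norm, add_sub_assoc] using norm_add_le y (z - v0)
      have : dist ((T ^ n) (a + w)) v0 < r + r := lt_of_le_of_lt this (by linarith)
      refine Metric.mem_ball.2 (lt_of_lt_of_le this ?_)
      have : r + r = min ε δ := by rw [hr]; ring
      rw [this]; exact min_le_right _ _
  -- Step 2: Birkhoff transitivity theorem via Baire category
  obtain ⟨b, hbc, hbne, hbb⟩ := TopologicalSpace.exists_countable_basis X
  haveI := hbc.to_subtype
  set G : b → Set X := fun B => ⋃ n : ℕ, (T ^ n) ⁻¹' (B : Set X) with hG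
  have hGo : ∀ B : b, IsOpen (G B) := fun B =>
    isOpen_iUnion fun n => (hbb.isOpen B.2).preimage (T ^ n).continuous
  have hGd : ∀ B : b, Dense (G B) := by
    intro B
    rw [dense_iff_inter_open]
    intro U hU hUne
    have hBo : IsOpen (B : Set X) := hbb.isOpen B.2
    have hBne : (B : Set X).Nonempty := by
      rcases Set.eq_empty_or_nonempty (B : Set X) with he | hne
      · exact absurd (he ▸ B.2) hbne
      · exact hne
    obtain ⟨n, x, hxU, hxV⟩ := trans U B hU hBo hUne hBne
    exact ⟨x, hxU, Set.mem_iUnion.2 ⟨n, hxV⟩⟩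
  have hdense : Dense (⋂ B : b, G B) := dense_iInter_of_isOpen hGo hGd
  obtain ⟨x, hx⟩ := hdense.nonempty
  refine ⟨x, hbb.dense_iff.2 ?_⟩
  intro o ho hone
  have := Set.mem_iInter.1 hx ⟨o, ho⟩
  obtain ⟨n, hn⟩ := Set.mem_iUnion.1 this
  exact ⟨(T ^ n) x, hn, ⟨n, rfl⟩⟩
end

section
/- Let X be a separable Banach space and T : X → X a continuous linear operator. Suppose that for every pair U, V of nonempty open subsets of X and every neighborhood W of zero in X, there exists a single positive integer n such that both T^n(U) ∩ W ≠ ∅ and T^n(W) ∩ V ≠ ∅. Then T is hypercyclic. -/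
open Metric Set

/-- a single n in the Godefroy–Shapiro condition suffices. -/
theorem hypercyclic_of_single_n
    {𝕜 : Type*} [RCLike 𝕜]
    {X : Type*} [NormedAddCommGroup X] [NormedSpace 𝕜 X] [CompleteSpace X]
    [TopologicalSpace.SeparableSpace X]
    (T : X →L[𝕜] X)
    (h : ∀ U V W : Set X, IsOpen U → IsOpen V → U.Nonempty → V.Nonempty →
      W ∈ nhds (0 : X) →
      ∃ n : ℕ, 0 < n ∧ ((T ^ n) '' U ∩ W).Nonempty ∧
        ((T ^ n) '' W ∩ V).Nonempty) :
    ∃ x : X, Dense (Set.range fun m : ℕ => (T ^ m) x) := by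
  -- Step 1: topological transitivity
  have trans : ∀ U V : Set X, IsOpen U → IsOpen V → U.Nonempty → V.Nonempty →
      ∃ n : ℕ, ((T ^ n) '' U ∩ V).Nonempty := by
    intro U V hU hV ⟨u₀, hu₀⟩ ⟨v₀, hv₀⟩
    obtain ⟨ε, hε, hεU⟩ := Metric.isOpen_iff.1 hU u₀ hu₀
    obtain ⟨δ, hδ, hδV⟩ := Metric.isOpen_iff.1 hV v₀ hv₀
    set r := min ε δ / 2 with hr
    have hrpos : 0 < r := by positivity
    obtain ⟨n, -, ⟨y, ⟨x, hxU, rfl⟩, hyW⟩, ⟨z, ⟨w, hwW, rfl⟩, hzV⟩⟩ :=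
      h (ball u₀ r) (ball v₀ r) (ball 0 r) isOpen_ball isOpen_ball
        ⟨u₀, mem_ball_self hrpos⟩ ⟨v₀, mem_ball_self hrpos⟩
        (ball_mem_nhds 0 hrpos)
    refine ⟨n, (T ^ n) (x + w), ⟨x + w, ?_, rfl⟩, ?_⟩
    · apply hεU
      have h1 : dist x u₀ < r := hxU
      have h2 : ‖w‖ < r := by simpa using hwW
      have : dist (x + w) u₀ ≤ dist x u₀ + ‖w‖ := by
        rw [dist_eq_norm, dist_eq_norm]
        calc ‖x + w - u₀‖ = ‖x - u₀ + w‖ := by rw [add_sub_right_comm]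
          _ ≤ ‖x - u₀‖ + ‖w‖ := norm_add_le _ _
      have : dist (x + w) u₀ < 2 * r := by linarith
      have hr2 : 2 * r ≤ ε := by
        rw [hr]; have := min_le_left ε δ; linarith
      exact mem_ball.2 (lt_of_lt_of_le this hr2)
    · apply hδV
      have hadd : (T ^ n) (x + w) = (T ^ n) x + (T ^ n) w := map_add _ _ _
      have h1 : ‖(T ^ n) x‖ < r := by simpa using hyW
      have h2 : dist ((T ^ n) w) v₀ < r := hzV
      have : dist ((T ^ n) (x + w)) v₀ ≤ ‖(T ^ n) x‖ + dist ((T ^ n) w) v₀ := by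
        rw [hadd, dist_eq_norm, dist_eq_norm]
        calc ‖(T ^ n) x + (T ^ n) w - v₀‖ = ‖(T ^ n) x + ((T ^ n) w - v₀)‖ := by rw [add_sub_assoc]
          _ ≤ ‖(T ^ n) x‖ + ‖(T ^ n) w - v₀‖ := norm_add_le _ _
      have : dist ((T ^ n) (x + w)) v₀ < 2 * r := by linarith
      have hr2 : 2 * r ≤ δ := by
        rw [hr]; have := min_le_right ε δ; linarith
      exact mem_ball.2 (lt_of_lt_of_le this hr2)
  -- Step 2: Baire category argument
  obtain ⟨B, hBc, hBne, hB⟩ := TopologicalSpace.exists_countable_basis X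
  set G : Set X → Set X := fun b => ⋃ n : ℕ, (T ^ n) ⁻¹' b with hG
  have hdense : Dense (⋂ b ∈ B, G b) := by
    refine dense_biInter_of_isOpen (fun b hb => ?_) hBc (fun b hb => ?_)
    · exact isOpen_iUnion fun n => (hB.isOpen hb).preimage (T ^ n).continuous
    · rw [dense_iff_inter_open]
      rintro U hU hUne
      have hbne : b.Nonempty := Set.nonempty_iff_ne_empty.2 fun hh => hBne (hh ▸ hb)
      obtain ⟨n, y, ⟨x, hxU, rfl⟩, hyb⟩ := trans U b hU (hB.isOpen hb) hUne hbne
      exact ⟨x, hxU, mem_iUnion.2 ⟨n, hyb⟩⟩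
  obtain ⟨x, hx⟩ := hdense.nonempty
  refine ⟨x, hB.dense_iff.2 fun o ho hone => ?_⟩
  simp only [mem_iInter] at hx
  obtain ⟨n, hn⟩ := mem_iUnion.1 (hx o ho)
  exact ⟨(T ^ n) x, hn, ⟨n, rfl⟩⟩
end

section
/- Let H be a separable infinite-dimensional complex Hilbert space and T : H → H a bounded linear operator. Then the following are equivalent: (i) T satisfies the hypothesis of the Hypercyclicity Criterion; (ii) for every pair U, V of nonempty open subsets of H and every neighborhood W of zero in H, there exists a positive integer n such that T^n(U) ∩ W ≠ ∅ and T^n(W) ∩ V ≠ ∅. -/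
/-- `T` satisfies the hypothesis of the Hypercyclicity Criterion. -/
def SatisfiesHypercyclicityCriterion
    {H : Type*} [NormedAddCommGroup H] [InnerProductSpace ℂ H]
    (T : H →L[ℂ] H) : Prop :=
  ∃ (Y Z : Set H) (n : ℕ → ℕ) (S : ℕ → H → H),
    Dense Y ∧ Dense Z ∧ StrictMono n ∧ (∀ k, 0 < n k) ∧
    (∀ y ∈ Y, Filter.Tendsto (fun k => (T ^ n k) y) Filter.atTop (nhds 0)) ∧
    (∀ z ∈ Z, Filter.Tendsto (fun k => S k z) Filter.atTop (nhds 0) ∧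
      Filter.Tendsto (fun k => (T ^ n k) (S k z)) Filter.atTop (nhds z))

section AuxiliaryLemmas

open Filter Metric Set

variable {H : Type*} [NormedAddCommGroup H] [InnerProductSpace ℂ H]

private lemma exists_unit_vector (hdim : ¬ FiniteDimensional ℂ H) : ∃ v : H, ‖v‖ = 1 := by
  have hne : ∃ v : H, v ≠ 0 := by
    by_contra h
    push_neg at h
    haveI : Subsingleton H := ⟨fun a b => by rw [h a, h b]⟩
    exact hdim inferInstance
  obtain ⟨v, hv⟩ := hne
  exact ⟨(‖v‖⁻¹ : ℂ) • v, norm_smul_inv_norm hv⟩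


variable {H : Type*} [NormedAddCommGroup H] [InnerProductSpace ℂ H]

lemma aux_transit (T : H →L[ℂ] H)
    (hC : ∀ U V W : Set H, IsOpen U → IsOpen V → U.Nonempty → V.Nonempty →
      W ∈ nhds (0 : H) →
      ∃ n : ℕ, 0 < n ∧ ((T ^ n) '' U ∩ W).Nonempty ∧ ((T ^ n) '' W ∩ V).Nonempty)
    (a b : H) (ra rb : ℝ) (hra : 0 < ra) (hrb : 0 < rb) :
    ∃ n : ℕ, 0 < n ∧ ∃ x ∈ ball a ra, (T ^ n) x ∈ ball b rb := by
  set s := min ra rb with hs_def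
  have hs : 0 < s := lt_min hra hrb
  obtain ⟨n, hn, h1, h2⟩ := hC (ball a (s/2)) (ball b (s/2)) (ball 0 (s/2))
    isOpen_ball isOpen_ball ⟨a, mem_ball_self (by positivity)⟩ ⟨b, mem_ball_self (by positivity)⟩
    (ball_mem_nhds 0 (by positivity))
  obtain ⟨y1, ⟨u, hu, rfl⟩, hy1⟩ := h1
  obtain ⟨y2, ⟨w, hw, rfl⟩, hy2⟩ := h2
  have hu' : ‖u - a‖ < s/2 := by rw [← dist_eq_norm]; exact hu
  have hw' : ‖w‖ < s/2 := mem_ball_zero_iff.mp hw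
  have hTu : ‖(T ^ n) u‖ < s/2 := mem_ball_zero_iff.mp hy1
  have hTw : ‖(T ^ n) w - b‖ < s/2 := by rw [← dist_eq_norm]; exact hy2
  refine ⟨n, hn, u + w, ?_, ?_⟩
  · rw [mem_ball, dist_eq_norm]
    have : u + w - a = (u - a) + w := by abel
    rw [this]
    calc ‖(u - a) + w‖ ≤ ‖u - a‖ + ‖w‖ := norm_add_le _ _
      _ < s/2 + s/2 := by linarith
      _ ≤ ra := by rw [add_halves]; exact min_le_left _ _
  · rw [mem_ball, dist_eq_norm, map_add]
    have : (T ^ n) u + (T ^ n) w - b = (T ^ n) u + ((T ^ n) w - b) := by abel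
    rw [this]
    calc ‖(T ^ n) u + ((T ^ n) w - b)‖ ≤ ‖(T ^ n) u‖ + ‖(T ^ n) w - b‖ := norm_add_le _ _
      _ < s/2 + s/2 := by linarith
      _ ≤ rb := by rw [add_halves]; exact min_le_right _ _

lemma aux_pair (T : H →L[ℂ] H)
    (hC : ∀ U V W : Set H, IsOpen U → IsOpen V → U.Nonempty → V.Nonempty →
      W ∈ nhds (0 : H) →
      ∃ n : ℕ, 0 < n ∧ ((T ^ n) '' U ∩ W).Nonempty ∧ ((T ^ n) '' W ∩ V).Nonempty)
    (v0 : H) (hv0 : ‖v0‖ = 1)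
    (a : H) (ρ c : ℝ) (hρ : 0 < ρ) (hc : 0 < c) (N : ℕ) :
    ∃ n : ℕ, N ≤ n ∧ 0 < n ∧ ∃ u ∈ ball a ρ, ‖(T ^ n) u‖ < c ∧
      ∃ w : H, ‖w‖ < c ∧ (T ^ n) w ∈ ball a ρ := by
  obtain ⟨k0, hk0, x0, hx0, hTx0⟩ := aux_transit T hC a v0 (ρ/2) (1/4) (by positivity) (by norm_num)
  set M0 : ℝ := ‖T ^ k0‖ with hM0_def
  have hM0 : 0 ≤ M0 := norm_nonneg _
  set b : ℝ := max 1 ‖T‖ with hb_def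
  have hb : (1:ℝ) ≤ b := le_max_left _ _
  have hbpow : (0:ℝ) < b ^ (N+1) := pow_pos (by linarith) _
  set E : ℝ := 2 * (M0 + 1) * b ^ (N + 1) + 1 with hE_def
  have hE : 0 < E := by positivity
  set δ : ℝ := min c (1/E) with hδ_def
  have hδ : 0 < δ := lt_min hc (by positivity)
  set Bstar : Set H := ball a ρ ∩ (T ^ k0) ⁻¹' (ball v0 (1/2)) with hB_def
  have hBopen : IsOpen Bstar := isOpen_ball.inter (isOpen_ball.preimage (T ^ k0).continuous)
  have hBne : Bstar.Nonempty := by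
    refine ⟨x0, ball_subset_ball (by linarith) hx0, ?_⟩
    exact mem_preimage.mpr (ball_subset_ball (by norm_num) hTx0)
  obtain ⟨n, hn, h1, h2⟩ := hC (ball a ρ) Bstar (ball 0 δ) isOpen_ball hBopen
    ⟨a, mem_ball_self hρ⟩ hBne (ball_mem_nhds 0 hδ)
  obtain ⟨y1, ⟨u, hu, rfl⟩, hy1⟩ := h1
  obtain ⟨y2, ⟨w, hw, rfl⟩, hy2⟩ := h2
  have hTu : ‖(T ^ n) u‖ < δ := mem_ball_zero_iff.mp hy1
  have hw' : ‖w‖ < δ := mem_ball_zero_iff.mp hw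
  obtain ⟨hTwball, hTwpre⟩ := hy2
  -- lower bound on the composed norm
  have hkey1 : (1:ℝ)/2 < ‖(T ^ k0) ((T ^ n) w)‖ := by
    have hd : ‖(T ^ k0) ((T ^ n) w) - v0‖ < 1/2 := by
      rw [← dist_eq_norm]; exact mem_preimage.mp hTwpre
    have := norm_sub_norm_le v0 ((T ^ k0) ((T ^ n) w))
    rw [norm_sub_rev] at hd
    linarith [hv0 ▸ this]
  -- upper bound
  have hkey2 : ‖(T ^ k0) ((T ^ n) w)‖ ≤ M0 * (b ^ n * δ) := by
    calc ‖(T ^ k0) ((T ^ n) w)‖ ≤ M0 * ‖(T ^ n) w‖ := (T ^ k0).le_opNorm _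
      _ ≤ M0 * (b ^ n * δ) := by
        refine mul_le_mul_of_nonneg_left ?_ hM0
        calc ‖(T ^ n) w‖ ≤ ‖T ^ n‖ * ‖w‖ := (T ^ n).le_opNorm _
          _ ≤ b ^ n * δ := by
            refine mul_le_mul ?_ hw'.le (norm_nonneg _) (by positivity)
            calc ‖T ^ n‖ ≤ ‖T‖ ^ n := norm_pow_le' T hn
              _ ≤ b ^ n := pow_le_pow_left₀ (norm_nonneg _) (le_max_right _ _) n
  -- deduce largeness
  have hδE : δ ≤ 1/E := min_le_right _ _
  have hbn : b ^ (N+1) < b ^ n := by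
    have h3 : (1:ℝ)/2 < M0 * (b ^ n * δ) := lt_of_lt_of_le hkey1 hkey2
    have hbnpos : (0:ℝ) < b ^ n := pow_pos (by linarith) _
    have h4 : M0 * (b ^ n * δ) ≤ (M0 + 1) * b ^ n * (1/E) := by
      have : M0 * (b ^ n * δ) ≤ (M0+1) * (b ^ n * (1/E)) := by
        refine mul_le_mul (by linarith) (mul_le_mul_of_nonneg_left hδE hbnpos.le) (by positivity) (by linarith)
      linarith [this, mul_assoc (M0+1) (b^n) (1/E)]
    have h5 : E < 2 * ((M0+1) * b ^ n) := by
      have h6 : (1:ℝ)/2 < (M0+1) * b ^ n * (1/E) := lt_of_lt_of_le h3 h4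
      have h7 : (0:ℝ) < (M0+1) * b ^ n := by positivity
      rw [mul_one_div, lt_div_iff₀ hE] at h6
      linarith
    rw [hE_def] at h5
    nlinarith
  have hNn : N ≤ n := by
    by_contra hcon
    push_neg at hcon
    have : b ^ n ≤ b ^ (N+1) := pow_le_pow_right₀ hb (by omega)
    linarith
  exact ⟨n, hNn, hn, u, hu, lt_of_lt_of_le hTu (min_le_left _ _), w,
    lt_of_lt_of_le hw' (min_le_left _ _), hTwball⟩

end AuxiliaryLemmas

open Filter Metric Set in
/-- the Hypercyclicity Criterion is equivalent to the open-set
condition of Theorem 2.6. -/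
theorem criterion_iff_open_set_condition
    {H : Type*} [NormedAddCommGroup H] [InnerProductSpace ℂ H]
    [CompleteSpace H] [TopologicalSpace.SeparableSpace H]
    (hdim : ¬ FiniteDimensional ℂ H)
    (T : H →L[ℂ] H) :
    SatisfiesHypercyclicityCriterion T ↔
    (∀ U V W : Set H, IsOpen U → IsOpen V → U.Nonempty → V.Nonempty →
      W ∈ nhds (0 : H) →
      ∃ n : ℕ, 0 < n ∧ ((T ^ n) '' U ∩ W).Nonempty ∧
        ((T ^ n) '' W ∩ V).Nonempty) := by
  constructor
  · -- forward direction
    rintro ⟨Y, Z, n, S, hY, hZ, hmono, hpos, hy, hz⟩ U V W hU hV hUne hVne hW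
    obtain ⟨y, hyY, hyU⟩ := hY.exists_mem_open hU hUne
    obtain ⟨z, hzZ, hzV⟩ := hZ.exists_mem_open hV hVne
    have e1 : ∀ᶠ k in atTop, (T ^ n k) y ∈ W := (hy y hyY).eventually_mem hW
    have e2 : ∀ᶠ k in atTop, S k z ∈ W := (hz z hzZ).1.eventually_mem hW
    have e3 : ∀ᶠ k in atTop, (T ^ n k) (S k z) ∈ V :=
      (hz z hzZ).2.eventually_mem (hV.mem_nhds hzV)
    obtain ⟨k, hk1, hk2, hk3⟩ := (e1.and (e2.and e3)).exists
    exact ⟨n k, hpos k, ⟨(T ^ n k) y, ⟨y, hyU, rfl⟩, hk1⟩,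
      ⟨(T ^ n k) (S k z), ⟨S k z, hk2, rfl⟩, hk3⟩⟩
  · -- backward direction
    intro hC
    classical
    haveI : Nonempty H := ⟨0⟩
    obtain ⟨v0, hv0⟩ := exists_unit_vector hdim
    set q : ℕ → H := TopologicalSpace.denseSeq H with hq_def
    have hq : DenseRange q := TopologicalSpace.denseRange_denseSeq H
    -- the two families of dense open sets
    set Oh : ℕ × ℕ → Set H :=
      fun p => ⋃ m : ℕ, (T ^ m) ⁻¹' (ball (q p.1) (1/(p.2+1))) with hOh_def
    set Op : ℕ → Set H := fun k => ⋃ m : ℕ, ⋃ (_ : k + 1 ≤ m),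
        ({y : H | ‖(T ^ m) y‖ < 1/(k+1)} ∩
          ⋃ w ∈ ball (0:H) (1/(k+1)), ball ((T ^ m) w) (1/(k+1))) with hOp_def
    have hOh_open : ∀ p, IsOpen (Oh p) := fun p =>
      isOpen_iUnion fun m => isOpen_ball.preimage (T ^ m).continuous
    have hOp_open : ∀ k, IsOpen (Op k) := fun k =>
      isOpen_iUnion fun m => isOpen_iUnion fun _ =>
        ((isOpen_lt ((T ^ m).continuous.norm) continuous_const).inter
          (isOpen_biUnion fun w _ => isOpen_ball))
    have hOh_dense : ∀ p, Dense (Oh p) := by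
      intro p
      rw [Metric.dense_iff]
      intro y ε hε
      obtain ⟨m, hm, xx, hxx, hTxx⟩ := aux_transit T hC y (q p.1) ε (1/(p.2+1)) hε (by positivity)
      exact ⟨xx, hxx, mem_iUnion.mpr ⟨m, hTxx⟩⟩
    have hOp_dense : ∀ k, Dense (Op k) := by
      intro k
      rw [Metric.dense_iff]
      intro y ε hε
      have hc : (0:ℝ) < 1/(k+1) := by positivity
      set ρ : ℝ := min ε (1/(k+1)/3) with hρ_def
      have hρ : 0 < ρ := lt_min hε (by positivity)
      obtain ⟨m, hNm, hm0, u, hu, hTu, w0, hw0, hTw0⟩ :=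
        aux_pair T hC v0 hv0 y ρ (1/(k+1)) hρ hc (k+1)
      refine ⟨u, ball_subset_ball (min_le_left _ _) hu, ?_⟩
      refine mem_iUnion.mpr ⟨m, mem_iUnion.mpr ⟨hNm, ?_, ?_⟩⟩
      · exact hTu
      · refine mem_biUnion (mem_ball_zero_iff.mpr hw0) ?_
        rw [mem_ball, dist_eq_norm]
        have h1 : ‖u - y‖ < ρ := by rw [← dist_eq_norm]; exact hu
        have h2 : ‖(T ^ m) w0 - y‖ < ρ := by rw [← dist_eq_norm]; exact hTw0
        have h3 : u - (T ^ m) w0 = (u - y) - ((T ^ m) w0 - y) := by abel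
        have h4 : ρ ≤ 1/(k+1)/3 := min_le_right _ _
        calc ‖u - (T ^ m) w0‖ = ‖(u - y) - ((T ^ m) w0 - y)‖ := by rw [h3]
          _ ≤ ‖u - y‖ + ‖(T ^ m) w0 - y‖ := norm_sub_le _ _
          _ < ρ + ρ := by linarith
          _ < 1/(k+1) := by linarith
    -- Baire category
    set F : (ℕ × ℕ) ⊕ ℕ → Set H := Sum.elim Oh Op with hF_def
    have hFdense : Dense (⋂ i, F i) := by
      refine dense_iInter_of_isOpen ?_ ?_
      · rintro (p | k)
        · exact hOh_open p
        · exact hOp_open k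
      · rintro (p | k)
        · exact hOh_dense p
        · exact hOp_dense k
    obtain ⟨x, hx⟩ := hFdense.nonempty
    have hx1 : ∀ p : ℕ × ℕ, x ∈ Oh p := fun p => mem_iInter.mp hx (Sum.inl p)
    have hx2 : ∀ k : ℕ, x ∈ Op k := fun k => mem_iInter.mp hx (Sum.inr k)
    -- extract the pair property
    have Hpair : ∀ L : ℕ, ∃ m : ℕ, L + 1 ≤ m ∧ ‖(T ^ m) x‖ < 1/(L+1) ∧
        ∃ w : H, ‖w‖ < 1/(L+1) ∧ ‖(T ^ m) w - x‖ < 1/(L+1) := by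
      intro L
      have := hx2 L
      rw [hOp_def, mem_iUnion] at this
      obtain ⟨m, hm⟩ := this
      rw [mem_iUnion] at hm
      obtain ⟨hLm, hmem⟩ := hm
      obtain ⟨h1, h2⟩ := hmem
      rw [mem_iUnion₂] at h2
      obtain ⟨w, hwball, hxball⟩ := h2
      refine ⟨m, hLm, h1, w, mem_ball_zero_iff.mp hwball, ?_⟩
      rw [← norm_sub_rev, ← dist_eq_norm]
      exact hxball
    -- weakening lemma
    have weaken : ∀ k L m : ℕ, k ≤ L →
        (L + 1 ≤ m ∧ ‖(T ^ m) x‖ < 1/(L+1) ∧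
          ∃ w : H, ‖w‖ < 1/(L+1) ∧ ‖(T ^ m) w - x‖ < 1/(L+1)) →
        (k + 1 ≤ m ∧ ‖(T ^ m) x‖ < 1/(k+1) ∧
          ∃ w : H, ‖w‖ < 1/(k+1) ∧ ‖(T ^ m) w - x‖ < 1/(k+1)) := by
      intro k L m hkL ⟨hLe, hb1, w, hb2, hb3⟩
      have hle : (1:ℝ)/(L+1) ≤ 1/(k+1) := by
        apply one_div_le_one_div_of_le (by positivity)
        have : (k:ℝ) ≤ L := Nat.cast_le.mpr hkL
        linarith
      exact ⟨by omega, lt_of_lt_of_le hb1 hle, w, lt_of_lt_of_le hb2 hle,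
        lt_of_lt_of_le hb3 hle⟩
    -- recursive definition of the sequence
    let nn : ℕ → ℕ := fun k =>
      Nat.rec (Hpair 0).choose (fun k ih => (Hpair (max (k+1) ih)).choose) k
    have hnn0 : nn 0 = (Hpair 0).choose := rfl
    have hnn_succ : ∀ k, nn (k+1) = (Hpair (max (k+1) (nn k))).choose := fun k => rfl
    have hQ : ∀ k : ℕ, k + 1 ≤ nn k ∧ ‖(T ^ nn k) x‖ < 1/(k+1) ∧
        ∃ w : H, ‖w‖ < 1/(k+1) ∧ ‖(T ^ nn k) w - x‖ < 1/(k+1) := by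
      intro k
      cases k with
      | zero => exact (Hpair 0).choose_spec
      | succ k =>
        have hspec := (Hpair (max (k+1) (nn k))).choose_spec
        rw [← hnn_succ k] at hspec
        exact weaken (k+1) (max (k+1) (nn k)) (nn (k+1)) (le_max_left _ _) hspec
    have hmono : StrictMono nn := by
      apply strictMono_nat_of_lt_succ
      intro k
      have hspec := (Hpair (max (k+1) (nn k))).choose_spec
      rw [← hnn_succ k] at hspec
      have := hspec.1
      omega
    -- the approximating vectors
    let ww : ℕ → H := fun k => (hQ k).2.2.choose
    have hww : ∀ k, ‖ww k‖ < 1/(k+1) ∧ ‖(T ^ nn k) (ww k) - x‖ < 1/(k+1) :=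
      fun k => (hQ k).2.2.choose_spec
    -- basic limits
    have hlim0 : Tendsto (fun k : ℕ => (1:ℝ)/(k+1)) atTop (nhds 0) :=
      tendsto_one_div_add_atTop_nhds_zero_nat
    have hxlim : Tendsto (fun k => (T ^ nn k) x) atTop (nhds 0) :=
      squeeze_zero_norm (fun k => ((hQ k).2.1).le) hlim0
    have hwlim : Tendsto ww atTop (nhds 0) :=
      squeeze_zero_norm (fun k => ((hww k).1).le) hlim0
    have hTwlim : Tendsto (fun k => (T ^ nn k) (ww k)) atTop (nhds x) :=
      tendsto_sub_nhds_zero_iff.mp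
        (squeeze_zero_norm (fun k => ((hww k).2).le) hlim0)
    -- density of the orbit
    set Y : Set H := Set.range (fun m : ℕ => (T ^ m) x) with hY_def
    have hYd : Dense Y := by
      rw [Metric.dense_iff]
      intro y ε hε
      obtain ⟨i, hi⟩ := Metric.denseRange_iff.mp hq y (ε/2) (by positivity)
      obtain ⟨j, hj⟩ := exists_nat_one_div_lt (show (0:ℝ) < ε/2 by positivity)
      have hmem := hx1 (i, j)
      rw [hOh_def, mem_iUnion] at hmem
      obtain ⟨m, hm⟩ := hmem
      rw [mem_preimage, mem_ball] at hm
      refine ⟨(T ^ m) x, ?_, ⟨m, rfl⟩⟩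
      rw [mem_ball]
      calc dist ((T ^ m) x) y ≤ dist ((T ^ m) x) (q i) + dist (q i) y := dist_triangle _ _ _
        _ < 1/(j+1) + ε/2 := by
            have := dist_comm (q i) y ▸ hi
            exact add_lt_add hm (by rw [dist_comm]; exact hi)
        _ < ε/2 + ε/2 := by linarith
        _ = ε := by ring
    -- the maps S
    set S : ℕ → H → H := fun k z =>
      if h : ∃ m : ℕ, (T ^ m) x = z then (T ^ h.choose) (ww k) else 0 with hS_def
    refine ⟨Y, Y, nn, S, hYd, hYd, hmono, fun k => by have := (hQ k).1; omega, ?_, ?_⟩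
    · rintro y ⟨m, rfl⟩
      have h1 : Tendsto (fun k => (T ^ m) ((T ^ nn k) x)) atTop (nhds ((T ^ m) (0:H))) :=
        ((T ^ m).continuous.tendsto 0).comp hxlim
      rw [map_zero] at h1
      refine h1.congr fun k => ?_
      rw [← ContinuousLinearMap.mul_apply, ← ContinuousLinearMap.mul_apply, pow_mul_comm]
    · intro z hz
      have hzr : ∃ m : ℕ, (T ^ m) x = z := hz
      have hSz : ∀ k, S k z = (T ^ hzr.choose) (ww k) := fun k => by
        simp only [hS_def]
        exact dif_pos hzr
      constructor
      · have h1 : Tendsto (fun k => (T ^ hzr.choose) (ww k)) atTop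
            (nhds ((T ^ hzr.choose) (0:H))) :=
          ((T ^ hzr.choose).continuous.tendsto 0).comp hwlim
        rw [map_zero] at h1
        exact h1.congr fun k => (hSz k).symm
      · have h1 : Tendsto (fun k => (T ^ hzr.choose) ((T ^ nn k) (ww k))) atTop
            (nhds ((T ^ hzr.choose) x)) :=
          ((T ^ hzr.choose).continuous.tendsto x).comp hTwlim
        rw [hzr.choose_spec] at h1
        refine h1.congr fun k => ?_
        rw [hSz k, ← ContinuousLinearMap.mul_apply, ← ContinuousLinearMap.mul_apply,
          pow_mul_comm]
end

section
/- Let H be a separable infinite-dimensional complex Hilbert space and T : H → H a bounded linear operator. Then the following are equivalent: (i) T satisfies the hypothesis of the Hypercyclicity Criterion; (ii) T is hypercyclic, and for every nonempty open subset U of H and every neighborhood W of zero in H, there exists a positive integer n such that T^n(U) ∩ W ≠ ∅ and T^{-n}(U) ∩ W ≠ ∅ (where T^{-n}(U) denotes the preimage of U under T^n). -/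
/-!
(i) ⇒ (ii): if `y ∈ Y` lies in `U` and `z ∈ Z` in `V`, then `y + S_k z` lies in `U` and
`T^{n_k} (y + S_k z)` in `V` for large `k`. So `T` is topologically transitive, and Birkhoff's
transitivity theorem (a Baire category argument) gives a hypercyclic vector; the condition is read
off from `T^{n_k} y` and `S_k z`.

(ii) ⇒ (i): in a space without isolated points a dense orbit visits every open set infinitely
often, which upgrades the condition to: for nonempty open `U`, `V` and a neighbourhood `W` of `0`
there are arbitrarily large `n` with `T^n U ∩ W ≠ ∅` and `T^n W ∩ V ≠ ∅`. By Baire in `H × H`, a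
generic pair `(y, z)` then has dense orbits and, for every `ε > 0`, arbitrarily large `n` with
`‖T^n y‖ < ε` and `‖T^n w - z‖ < ε` for some `‖w‖ < ε`. Extracting such times `n_k` with
witnesses `w_k`, the orbits of `y` and `z` serve as `Y` and `Z`, with `S_k (T^j z) = T^j w_k`.
-/

open Filter Topology Set Function Metric

theorem IsOpenMap.tendsto_residual {X Y : Type*} [TopologicalSpace X] [TopologicalSpace Y]
    {g : X → Y} (hg : IsOpenMap g) (hc : Continuous g) :
    Tendsto g (residual X) (residual Y) :=
  le_countableGenerate_iff_of_countableInterFilter.2 fun _ ⟨ho, hd⟩ =>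
    residual_of_dense_open (ho.preimage hc) (hd.preimage hg)

theorem tendsto_of_dist_lt_one_div {X : Type*} [PseudoMetricSpace X] {a : ℕ → X} {c : X}
    (h : ∀ k : ℕ, dist (a k) c < 1 / (k + 1)) : Tendsto a atTop (𝓝 c) :=
  tendsto_iff_dist_tendsto_zero.2 <|
    squeeze_zero (fun _ => dist_nonneg) (fun k => (h k).le) tendsto_one_div_add_atTop_nhds_zero_nat

section Dynamics

variable {X : Type*} [TopologicalSpace X] {f : X → X}

def HasDenseOrbit (f : X → X) (x : X) : Prop :=
  Dense (range fun n => f^[n] x)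

theorem eventually_residual_hasDenseOrbit [SecondCountableTopology X] (hf : Continuous f)
    (htrans : ∀ U V : Set X, IsOpen U → U.Nonempty → IsOpen V → V.Nonempty →
      ∃ n, ∃ u ∈ U, f^[n] u ∈ V) :
    ∀ᶠ x in residual X, HasDenseOrbit f x := by
  obtain ⟨B, hBc, hB0, hB⟩ := TopologicalSpace.exists_countable_basis X
  have hvisit : ∀ V ∈ B, ∀ᶠ x in residual X, ∃ n, f^[n] x ∈ V := by
    intro V hV
    have hVne : V.Nonempty := nonempty_iff_ne_empty.2 fun h => hB0 (h ▸ hV)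
    have hdense : Dense (⋃ n, f^[n] ⁻¹' V) := dense_iff_inter_open.2 fun U hU hUne => by
      obtain ⟨n, u, hu, hn⟩ := htrans U V hU hUne (hB.isOpen hV) hVne
      exact ⟨u, hu, mem_iUnion.2 ⟨n, hn⟩⟩
    filter_upwards [residual_of_dense_open
      (isOpen_iUnion fun n => (hB.isOpen hV).preimage (hf.iterate n)) hdense] with x hx
    exact mem_iUnion.1 hx
  filter_upwards [(eventually_countable_ball hBc).2 hvisit] with x hx
  exact hB.dense_iff.2 fun V hV _ => let ⟨n, hn⟩ := hx V hV; ⟨_, hn, n, rfl⟩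

section NoIsolatedPoints

variable [T1Space X] [∀ x : X, NeBot (𝓝[≠] x)] {x : X}

theorem HasDenseOrbit.frequently_mem (hx : HasDenseOrbit f x) {V : Set X} (hV : IsOpen V)
    (hVne : V.Nonempty) : ∃ᶠ n in atTop, f^[n] x ∈ V := by
  intro hev
  obtain ⟨N, hN⟩ := eventually_atTop.1 hev
  have hfin : ((fun n => f^[n] x) '' Iio N).Finite := (finite_Iio N).image _
  obtain ⟨_, hV', ⟨n, rfl⟩, hn⟩ := (hx.sdiff_finite hfin).inter_open_nonempty V hV hVne
  rcases lt_or_ge n N with h | h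
  exacts [hn ⟨n, h, rfl⟩, hN n h hV']

theorem HasDenseOrbit.frequently_exists_iterate_mem (hx : HasDenseOrbit f x) {U V : Set X}
    (hU : IsOpen U) (hUne : U.Nonempty) (hV : IsOpen V) (hVne : V.Nonempty) :
    ∃ᶠ m in atTop, ∃ u ∈ U, f^[m] u ∈ V := by
  refine frequently_atTop.2 fun N => ?_
  obtain ⟨a, ha⟩ := (hx.frequently_mem hU hUne).exists
  obtain ⟨b, hb, hbV⟩ := frequently_atTop.1 (hx.frequently_mem hV hVne) (a + N)
  refine ⟨b - a, by omega, f^[a] x, ha, ?_⟩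
  rwa [← iterate_add_apply, Nat.sub_add_cancel (by omega)]

/-- Apply the condition to `U ∩ f^[m] ⁻¹' V` and `W ∩ f^[m] ⁻¹' W`, where `m` is a large time at
which `U` visits `V`, and shift the time it provides by `m`. -/
theorem HasDenseOrbit.frequently_image_inter_nonempty_and_preimage_inter_nonempty
    (hx : HasDenseOrbit f x) (hf : Continuous f) {o : X} (ho : f o = o)
    (hcond : ∀ U W : Set X, IsOpen U → U.Nonempty → W ∈ 𝓝 o →
      ∃ n, (f^[n] '' U ∩ W).Nonempty ∧ (f^[n] ⁻¹' U ∩ W).Nonempty)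
    (U V W : Set X) (hU : IsOpen U) (hUne : U.Nonempty) (hV : IsOpen V) (hVne : V.Nonempty)
    (hW : W ∈ 𝓝 o) :
    ∃ᶠ n in atTop, (f^[n] '' U ∩ W).Nonempty ∧ (f^[n] ⁻¹' V ∩ W).Nonempty := by
  refine frequently_atTop.2 fun N => ?_
  obtain ⟨m, hmN, u, hu, hmu⟩ :=
    frequently_atTop.1 (hx.frequently_exists_iterate_mem hU hUne hV hVne) N
  have hW' : W ∩ f^[m] ⁻¹' W ∈ 𝓝 o :=
    inter_mem hW ((hf.iterate m).continuousAt.preimage_mem_nhds (by rwa [iterate_fixed ho]))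
  obtain ⟨n, ⟨_, ⟨v, hv, rfl⟩, hvW⟩, w, hw, hwW⟩ :=
    hcond (U ∩ f^[m] ⁻¹' V) _ (hU.inter (hV.preimage (hf.iterate m))) ⟨u, hu, hmu⟩ hW'
  refine ⟨m + n, by omega, ⟨_, ⟨v, hv.1, rfl⟩, ?_⟩, w, ?_, hwW.1⟩
  · rw [iterate_add_apply]; exact hvW.2
  · rw [mem_preimage, iterate_add_apply]; exact hw.2

end NoIsolatedPoints

end Dynamics

theorem eventually_residual_frequently_mem_ball {X : Type*} [PseudoMetricSpace X] {f : X → X}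
    (hf : Continuous f) {o : X}
    (hmix : ∀ U V W : Set X, IsOpen U → U.Nonempty → IsOpen V → V.Nonempty → W ∈ 𝓝 o →
      ∃ᶠ n in atTop, (f^[n] '' U ∩ W).Nonempty ∧ (f^[n] ⁻¹' V ∩ W).Nonempty)
    {ε : ℝ} (hε : 0 < ε) :
    ∀ᶠ p : X × X in residual (X × X),
      ∃ᶠ n in atTop, f^[n] p.1 ∈ ball o ε ∧ ∃ w ∈ ball o ε, f^[n] w ∈ ball p.2 ε := by
  simp only [frequently_atTop]
  refine eventually_countable_forall.2 fun N => residual_of_dense_open ?_ ?_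
  · refine isOpen_iff_mem_nhds.2 fun p ⟨n, hn, hp1, w, hw, hp2⟩ => ?_
    have h1 : ∀ᶠ q : X × X in 𝓝 p, f^[n] q.1 ∈ ball o ε :=
      ((hf.iterate n).comp continuous_fst).continuousAt.preimage_mem_nhds
        (isOpen_ball.mem_nhds hp1)
    have h2 : ∀ᶠ q : X × X in 𝓝 p, q.2 ∈ ball (f^[n] w) ε :=
      continuous_snd.continuousAt.preimage_mem_nhds (isOpen_ball.mem_nhds (mem_ball_comm.1 hp2))
    filter_upwards [h1, h2] with q hq1 hq2 using ⟨n, hn, hq1, w, hw, mem_ball_comm.1 hq2⟩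
  · refine dense_iff_inter_open.2 fun O hO ⟨p, hp⟩ => ?_
    obtain ⟨U, V, hU, hV, hpU, hpV, hUV⟩ := isOpen_prod_iff.1 hO p.1 p.2 hp
    obtain ⟨n, hn, ⟨_, ⟨u, hu, rfl⟩, hun⟩, w, hwV, hw⟩ := frequently_atTop.1
      (hmix U V _ hU ⟨_, hpU⟩ hV ⟨_, hpV⟩ (ball_mem_nhds o hε)) N
    exact ⟨(u, f^[n] w), hUV ⟨hu, hwV⟩, n, hn, hun, w, hw, mem_ball_self hε⟩

namespace SatisfiesHypercyclicityCriterion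

variable {H : Type*} [NormedAddCommGroup H] [InnerProductSpace ℂ H] {T : H →L[ℂ] H}

theorem exists_iterate_mem (hT : SatisfiesHypercyclicityCriterion T) {U V : Set H}
    (hU : IsOpen U) (hUne : U.Nonempty) (hV : IsOpen V) (hVne : V.Nonempty) :
    ∃ n, ∃ u ∈ U, T^[n] u ∈ V := by
  obtain ⟨Y, Z, n, S, hY, hZ, -, -, hTY, hSZ⟩ := hT
  obtain ⟨y, hy, hyU⟩ := hY.exists_mem_open hU hUne
  obtain ⟨z, hz, hzV⟩ := hZ.exists_mem_open hV hVne
  obtain ⟨hS, hTS⟩ := hSZ z hz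
  have hnear_y : Tendsto (fun k => y + S k z) atTop (𝓝 y) := by
    simpa using tendsto_const_nhds.add hS
  have hnear_z : Tendsto (fun k => (T ^ n k) (y + S k z)) atTop (𝓝 z) := by
    simpa using (hTY y hy).add hTS
  obtain ⟨k, hkU, hkV⟩ :=
    ((hnear_y.eventually (hU.mem_nhds hyU)).and (hnear_z.eventually (hV.mem_nhds hzV))).exists
  exact ⟨n k, _, hkU, by rwa [← FunLike.coe_pow_eq_iterate]⟩

theorem exists_pos_image_inter_nonempty_and_preimage_inter_nonempty
    (hT : SatisfiesHypercyclicityCriterion T) {U W : Set H} (hU : IsOpen U) (hUne : U.Nonempty)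
    (hW : W ∈ 𝓝 0) :
    ∃ n, 0 < n ∧ (T^[n] '' U ∩ W).Nonempty ∧ (T^[n] ⁻¹' U ∩ W).Nonempty := by
  obtain ⟨Y, Z, n, S, hY, hZ, -, hpos, hTY, hSZ⟩ := hT
  obtain ⟨y, hy, hyU⟩ := hY.exists_mem_open hU hUne
  obtain ⟨z, hz, hzU⟩ := hZ.exists_mem_open hU hUne
  obtain ⟨hS, hTS⟩ := hSZ z hz
  obtain ⟨k, hyW, hSW, hSU⟩ := ((hTY y hy).eventually hW |>.and <|
    (hS.eventually hW).and (hTS.eventually (hU.mem_nhds hzU))).exists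
  rw [FunLike.coe_pow_eq_iterate] at hyW hSU
  exact ⟨n k, hpos k, ⟨_, ⟨y, hyU, rfl⟩, hyW⟩, S k z, hSU, hSW⟩

theorem of_frequently_iterate_mem_ball {y z : H} (hy : HasDenseOrbit T y)
    (hz : HasDenseOrbit T z)
    (hyz : ∀ k : ℕ, ∃ᶠ n in atTop, T^[n] y ∈ ball 0 (1 / (k + 1)) ∧
      ∃ w ∈ ball (0 : H) (1 / (k + 1)), T^[n] w ∈ ball z (1 / (k + 1))) :
    SatisfiesHypercyclicityCriterion T := by
  obtain ⟨n, hmono, hn⟩ := extraction_forall_of_frequently fun k =>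
    (eventually_gt_atTop 0).and_frequently (hyz k)
  choose hpos hny w hw hnw using hn
  have hcomm (a b : ℕ) (v : H) : T^[a] (T^[b] v) = T^[b] (T^[a] v) := by
    rw [← iterate_add_apply, add_comm, iterate_add_apply]
  have hny0 : Tendsto (fun k => T^[n k] y) atTop (𝓝 0) := tendsto_of_dist_lt_one_div hny
  have hw0 : Tendsto w atTop (𝓝 0) := tendsto_of_dist_lt_one_div hw
  have hnwz : Tendsto (fun k => T^[n k] (w k)) atTop (𝓝 z) := tendsto_of_dist_lt_one_div hnw
  let index := invFun fun j => T^[j] z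
  simp only [SatisfiesHypercyclicityCriterion, FunLike.coe_pow_eq_iterate]
  refine ⟨range fun j => T^[j] y, range fun j => T^[j] z, n, fun k v => T^[index v] (w k),
    hy, hz, hmono, hpos, ?_, fun v hv => ?_⟩
  · rintro _ ⟨j, rfl⟩
    simp only [hcomm _ j]
    exact ((T.continuous.iterate j).tendsto' 0 0 (iterate_map_zero T j)).comp hny0
  · have hv : T^[index v] z = v := invFun_eq hv
    simp only [hcomm _ (index v)]
    exact ⟨((T.continuous.iterate _).tendsto' 0 0 (iterate_map_zero T _)).comp hw0,
      ((T.continuous.iterate _).tendsto' z v hv).comp hnwz⟩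

theorem of_hasDenseOrbit [CompleteSpace H] [SecondCountableTopology H] [Nontrivial H] {x : H}
    (hx : HasDenseOrbit T x)
    (hcond : ∀ U W : Set H, IsOpen U → U.Nonempty → W ∈ 𝓝 0 →
      ∃ n, (T^[n] '' U ∩ W).Nonempty ∧ (T^[n] ⁻¹' U ∩ W).Nonempty) :
    SatisfiesHypercyclicityCriterion T := by
  have horbit : ∀ᶠ v in residual H, HasDenseOrbit T v :=
    eventually_residual_hasDenseOrbit T.continuous fun U V hU hUne hV hVne =>
      (hx.frequently_exists_iterate_mem hU hUne hV hVne).exists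
  have hmix :=
    hx.frequently_image_inter_nonempty_and_preimage_inter_nonempty T.continuous (map_zero T) hcond
  have hpairs := ((isOpenMap_fst.tendsto_residual continuous_fst).eventually horbit).and <|
    ((isOpenMap_snd.tendsto_residual continuous_snd).eventually horbit).and <|
      eventually_countable_forall.2 fun k : ℕ =>
        eventually_residual_frequently_mem_ball T.continuous hmix (Nat.one_div_pos_of_nat (n := k))
  obtain ⟨⟨y, z⟩, hy, hz, hyz⟩ := (dense_of_mem_residual hpairs).nonempty
  exact of_frequently_iterate_mem_ball hy hz hyz

end SatisfiesHypercyclicityCriterion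

/-- the Hypercyclicity Criterion is equivalent to hypercyclicity
plus the image/preimage condition of Proposition 2.7. -/
theorem criterion_iff_hypercyclic_and_condition
    {H : Type*} [NormedAddCommGroup H] [InnerProductSpace ℂ H]
    [CompleteSpace H] [TopologicalSpace.SeparableSpace H]
    (hdim : ¬ FiniteDimensional ℂ H)
    (T : H →L[ℂ] H) :
    SatisfiesHypercyclicityCriterion T ↔
    ((∃ x : H, Dense (Set.range fun m : ℕ => (T ^ m) x)) ∧
      ∀ U W : Set H, IsOpen U → U.Nonempty → W ∈ nhds (0 : H) →
        ∃ n : ℕ, 0 < n ∧ ((T ^ n) '' U ∩ W).Nonempty ∧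
          ((T ^ n) ⁻¹' U ∩ W).Nonempty) := by
  simp only [FunLike.coe_pow_eq_iterate]
  refine ⟨fun hT => ⟨?_, fun U W hU hUne hW =>
    hT.exists_pos_image_inter_nonempty_and_preimage_inter_nonempty hU hUne hW⟩,
    fun ⟨⟨x, hx⟩, hcond⟩ => ?_⟩
  · exact (dense_of_mem_residual (eventually_residual_hasDenseOrbit T.continuous
      fun U V hU hUne hV hVne => hT.exists_iterate_mem hU hUne hV hVne)).nonempty
  · have : Nontrivial H := not_subsingleton_iff_nontrivial.1 fun _ => hdim inferInstance
    exact .of_hasDenseOrbit hx fun U W hU hUne hW =>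
      (hcond U W hU hUne hW).imp fun _ => And.right
end

section
/- Let X be a separable Banach space and (T_n)_{n≥1} a sequence of bounded linear operators on X, each with dense range. Suppose there exist dense subsets Y and Z of X, a strictly increasing sequence (n_k) of positive integers, and for each k a map S_k : Z → X such that T_{n_k} y → 0 for every y ∈ Y, and for every z ∈ Z, S_k z → 0 and T_{n_k}(S_k z) → z as k → ∞. Then the sequence (T_n) is hypercyclic, i.e. there exists x ∈ X such that {T_n x : n ≥ 1} is dense in X. -/
/-- the Hypercyclicity Criterion for a sequence of operators with
dense range. -/
theorem hypercyclicity_criterion_for_sequences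
    {𝕜 : Type*} [RCLike 𝕜]
    {X : Type*} [NormedAddCommGroup X] [NormedSpace 𝕜 X] [CompleteSpace X]
    [TopologicalSpace.SeparableSpace X]
    (T : ℕ → X →L[𝕜] X) (hrange : ∀ m, 1 ≤ m → DenseRange (T m))
    (Y Z : Set X) (hY : Dense Y) (hZ : Dense Z)
    (n : ℕ → ℕ) (hmono : StrictMono n) (hpos : ∀ k, 0 < n k)
    (S : ℕ → X → X)
    (h1 : ∀ y ∈ Y, Filter.Tendsto (fun k => (T (n k)) y) Filter.atTop (nhds 0))
    (h2 : ∀ z ∈ Z, Filter.Tendsto (fun k => S k z) Filter.atTop (nhds 0) ∧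
      Filter.Tendsto (fun k => (T (n k)) (S k z)) Filter.atTop (nhds z)) :
    ∃ x : X, Dense {y : X | ∃ m : ℕ, 1 ≤ m ∧ (T m) x = y} := by
  obtain ⟨b, hbc, hbne, hbasis⟩ := TopologicalSpace.exists_countable_basis X
  set A : Set X → Set X := fun U => ⋃ m : ℕ, ⋃ _ : 1 ≤ m, (T m) ⁻¹' U with hA
  have hAopen : ∀ U ∈ b, IsOpen (A U) := by
    intro U hU
    exact isOpen_iUnion fun m => isOpen_iUnion fun _ =>
      (hbasis.isOpen hU).preimage (T m).continuous
  have hAdense : ∀ U ∈ b, Dense (A U) := by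
    intro U hU
    rw [dense_iff_inter_open]
    intro V hV hVne
    obtain ⟨y, hyV, hyY⟩ := hY.inter_open_nonempty V hV hVne
    have hUne : U.Nonempty := Set.nonempty_iff_ne_empty.2 (fun h => hbne (h ▸ hU))
    obtain ⟨z, hzU, hzZ⟩ := hZ.inter_open_nonempty U (hbasis.isOpen hU) hUne
    obtain ⟨hS0, hTS⟩ := h2 z hzZ
    have htV : Filter.Tendsto (fun k => y + S k z) Filter.atTop (nhds y) := by
      simpa using (tendsto_const_nhds.add hS0 :
        Filter.Tendsto (fun k => y + S k z) Filter.atTop (nhds (y + 0)))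
    have htU : Filter.Tendsto (fun k => (T (n k)) (y + S k z)) Filter.atTop (nhds z) := by
      have := (h1 y hyY).add hTS
      simp only [zero_add] at this
      simpa [map_add] using this
    have hev := (htV.eventually (hV.mem_nhds hyV)).and
      (htU.eventually ((hbasis.isOpen hU).mem_nhds hzU))
    obtain ⟨k, hk1, hk2⟩ := hev.exists
    refine ⟨y + S k z, hk1, ?_⟩
    exact Set.mem_iUnion.2 ⟨n k, Set.mem_iUnion.2 ⟨hpos k, hk2⟩⟩
  have hGdense : Dense (⋂ U ∈ b, A U) :=
    dense_biInter_of_isOpen hAopen hbc hAdense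
  obtain ⟨x, hx⟩ := hGdense.nonempty
  refine ⟨x, hbasis.dense_iff.2 fun U hU hUne => ?_⟩
  have hxU : x ∈ A U := by
    have := Set.mem_iInter₂.1 hx U hU
    exact this
  obtain ⟨m, hm⟩ := Set.mem_iUnion.1 hxU
  obtain ⟨hm1, hmU⟩ := Set.mem_iUnion.1 hm
  exact ⟨T m x, hmU, m, hm1, rfl⟩
end

section
/- Let H be a separable infinite-dimensional complex Hilbert space and (T_n)_{n≥1} a sequence of bounded linear operators on H such that each T_n has dense range and T_n T_m = T_m T_n for all m, n. Then the following are equivalent: (i) (T_n) satisfies the hypothesis of the Hypercyclicity Criterion; (ii) for every pair U, V of nonempty open subsets of H and every neighborhood W of zero, there exists n such that T_n(U) ∩ W ≠ ∅ and T_n(W) ∩ V ≠ ∅; (iii) (T_n) is hypercyclic and for every nonempty open subset U of H and every neighborhood W of zero, there exists n such that T_n(U) ∩ W ≠ ∅ and T_n^{-1}(U) ∩ W ≠ ∅ (where T_n^{-1}(U) is the preimage of U under T_n). -/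
open Filter Topology Metric Set

section SeqCriterionAux

variable {H : Type*} [NormedAddCommGroup H] [InnerProductSpace ℂ H]

/-- Condition (ii) of the corollary. -/
def SeqCondII (T : ℕ → H →L[ℂ] H) : Prop :=
  ∀ U V W : Set H, IsOpen U → IsOpen V → U.Nonempty → V.Nonempty → W ∈ nhds (0 : H) →
    ∃ n : ℕ, 1 ≤ n ∧ ((T n) '' U ∩ W).Nonempty ∧ ((T n) '' W ∩ V).Nonempty

/-- Condition (ii) self-improves: the `n` can be taken arbitrarily large. -/
lemma seqCondII_large [Nontrivial H] (T : ℕ → H →L[ℂ] H) (h2 : SeqCondII T) (N : ℕ)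
    (U V W : Set H) (hU : IsOpen U) (hV : IsOpen V) (hUne : U.Nonempty) (hVne : V.Nonempty)
    (hW : W ∈ nhds (0 : H)) :
    ∃ n : ℕ, N ≤ n ∧ 1 ≤ n ∧ ((T n) '' U ∩ W).Nonempty ∧ ((T n) '' W ∩ V).Nonempty := by
  obtain ⟨v₀, hv₀⟩ := hVne
  obtain ⟨r₀, hr₀, hr₀V⟩ := Metric.isOpen_iff.1 hV v₀ hv₀
  -- a nonzero point `v` with `dist v v₀ ≤ r₀ / 2`
  have hvex : ∃ v : H, v ≠ 0 ∧ dist v v₀ ≤ r₀ / 2 := by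
    rcases eq_or_ne v₀ 0 with h | h
    · obtain ⟨e, he⟩ := exists_ne (0 : H)
      have hepos : (0:ℝ) < ‖e‖ := norm_pos_iff.2 he
      refine ⟨(r₀ / (2 * ‖e‖)) • e, ?_, ?_⟩
      · simp only [ne_eq, smul_eq_zero, not_or]
        exact ⟨by positivity, he⟩
      · rw [h, dist_zero_right, norm_smul, Real.norm_eq_abs, abs_of_pos (by positivity)]
        rw [div_mul_eq_mul_div, mul_comm (2:ℝ) ‖e‖, ← div_div, mul_div_assoc,
          div_self (ne_of_gt hepos), mul_one]
    · exact ⟨v₀, h, by rw [dist_self]; positivity⟩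
  obtain ⟨v, hvne, hdistv⟩ := hvex
  have hvpos : (0:ℝ) < ‖v‖ := norm_pos_iff.2 hvne
  have hballV : ball v (r₀ / 2) ⊆ V := by
    intro y hy
    apply hr₀V
    rw [mem_ball] at hy ⊢
    calc dist y v₀ ≤ dist y v + dist v v₀ := dist_triangle _ _ _
      _ < r₀ / 2 + r₀ / 2 := by linarith
      _ = r₀ := by ring
  set ρ : ℝ := min (r₀ / 2) (‖v‖ / 2) with hρdef
  have hρpos : 0 < ρ := lt_min (by positivity) (by positivity)
  have hballV' : ball v ρ ⊆ V := fun y hy => hballV (ball_subset_ball (min_le_left _ _) hy)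
  -- bound on the first N operators
  set C : ℝ := ∑ i ∈ Finset.range N, ‖T i‖ with hCdef
  have hC0 : 0 ≤ C := Finset.sum_nonneg fun i _ => norm_nonneg _
  have hCle : ∀ i, i < N → ‖T i‖ ≤ C := fun i hi =>
    Finset.single_le_sum (fun j _ => norm_nonneg (T j)) (Finset.mem_range.2 hi)
  obtain ⟨εW, hεW, hεWsub⟩ := Metric.mem_nhds_iff.1 hW
  set ε : ℝ := min εW (‖v‖ / (2 * (C + 1))) with hεdef
  have hεpos : 0 < ε := lt_min hεW (by positivity)
  obtain ⟨n, hn1, h1, h2'⟩ := h2 U (ball v ρ) (ball 0 ε) hU isOpen_ball hUne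
    ⟨v, mem_ball_self hρpos⟩ (ball_mem_nhds _ hεpos)
  obtain ⟨b, ⟨w, hwW, hwb⟩, hbV⟩ := h2'
  have hwnorm : ‖w‖ < ε := mem_ball_zero_iff.1 hwW
  refine ⟨n, ?_, hn1, ?_, ?_⟩
  · -- N ≤ n
    by_contra hcon
    push_neg at hcon
    have hb1 : ‖b‖ ≤ C * ε := by
      rw [← hwb]
      calc ‖T n w‖ ≤ ‖T n‖ * ‖w‖ := (T n).le_opNorm w
        _ ≤ C * ε := mul_le_mul (hCle n hcon) (le_of_lt hwnorm) (norm_nonneg _) hC0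
    have hb2 : ‖v‖ / 2 ≤ ‖b‖ := by
      have hb' := mem_ball.1 hbV
      rw [dist_eq_norm] at hb'
      have htri : ‖v‖ ≤ ‖b - v‖ + ‖b‖ := by
        calc ‖v‖ = ‖(b - v) - b‖ := by rw [show (b - v) - b = -v by abel, norm_neg]
          _ ≤ ‖b - v‖ + ‖b‖ := norm_sub_le _ _
      have hρle : ρ ≤ ‖v‖ / 2 := min_le_right _ _
      linarith
    have hεle : ε ≤ ‖v‖ / (2 * (C + 1)) := min_le_right _ _
    have hmul : C * ε ≤ C * (‖v‖ / (2 * (C + 1))) := mul_le_mul_of_nonneg_left hεle hC0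
    have hlt : C * (‖v‖ / (2 * (C + 1))) < ‖v‖ / 2 := by
      rw [mul_div_assoc', div_lt_div_iff₀ (by positivity) (by positivity)]
      nlinarith
    linarith
  · obtain ⟨a, ⟨u, huU, hua⟩, haW⟩ := h1
    exact ⟨a, ⟨u, huU, hua⟩, hεWsub (ball_subset_ball (min_le_left _ _) haW)⟩
  · exact ⟨b, ⟨w, hεWsub (ball_subset_ball (min_le_left _ _) hwW), hwb⟩, hballV' hbV⟩

/-- Condition (ii) implies topological transitivity of the sequence. -/
lemma seqCondII_trans (T : ℕ → H →L[ℂ] H) (h2 : SeqCondII T)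
    (U V : Set H) (hU : IsOpen U) (hV : IsOpen V) (hUne : U.Nonempty) (hVne : V.Nonempty) :
    ∃ n : ℕ, 1 ≤ n ∧ ∃ u ∈ U, T n u ∈ V := by
  obtain ⟨a, haU⟩ := hUne
  obtain ⟨r, hr, hrU⟩ := Metric.isOpen_iff.1 hU a haU
  obtain ⟨b, hbV⟩ := hVne
  obtain ⟨s, hs, hsV⟩ := Metric.isOpen_iff.1 hV b hbV
  set δ : ℝ := min r s / 2 with hδdef
  have hδ : 0 < δ := by positivity
  have hδr : 2 * δ ≤ r := by
    rw [hδdef]; have := min_le_left r s; linarith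
  have hδs : 2 * δ ≤ s := by
    rw [hδdef]; have := min_le_right r s; linarith
  obtain ⟨n, hn1, h1, h2'⟩ := h2 (ball a δ) (ball b δ) (ball 0 δ) isOpen_ball isOpen_ball
    ⟨a, mem_ball_self hδ⟩ ⟨b, mem_ball_self hδ⟩ (ball_mem_nhds _ hδ)
  obtain ⟨c, ⟨u, huU, hcu⟩, hTu⟩ := h1
  obtain ⟨d, ⟨w, hwW, hdw⟩, hTw⟩ := h2'
  have hu : ‖u - a‖ < δ := by rw [← dist_eq_norm]; exact mem_ball.1 huU
  have hw : ‖w‖ < δ := mem_ball_zero_iff.1 hwW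
  have hTu' : ‖T n u‖ < δ := by rw [hcu]; exact mem_ball_zero_iff.1 hTu
  have hTw' : ‖T n w - b‖ < δ := by rw [hdw, ← dist_eq_norm]; exact mem_ball.1 hTw
  refine ⟨n, hn1, u + w, ?_, ?_⟩
  · apply hrU
    rw [mem_ball, dist_eq_norm]
    calc ‖u + w - a‖ = ‖(u - a) + w‖ := by
          rw [show u + w - a = (u - a) + w from by abel]
      _ ≤ ‖u - a‖ + ‖w‖ := norm_add_le _ _
      _ < δ + δ := by linarith
      _ ≤ r := by linarith
  · apply hsV
    rw [mem_ball, dist_eq_norm, map_add]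
    calc ‖T n u + T n w - b‖ = ‖T n u + (T n w - b)‖ := by
          rw [show T n u + T n w - b = T n u + (T n w - b) from by abel]
      _ ≤ ‖T n u‖ + ‖T n w - b‖ := norm_add_le _ _
      _ < δ + δ := by linarith
      _ ≤ s := by linarith

/-- The Baire category construction: a vector with dense orbit which in addition can be
sent arbitrarily close to `0` by suitable `T n` of arbitrarily large index, with
approximate preimages of itself close to `0` as well. -/
lemma seqCondII_baire [Nontrivial H] [CompleteSpace H] [TopologicalSpace.SeparableSpace H]
    (T : ℕ → H →L[ℂ] H) (h2 : SeqCondII T) :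
    ∃ x : H, Dense {y : H | ∃ m : ℕ, 1 ≤ m ∧ (T m) x = y} ∧
      ∀ k N : ℕ, ∃ n : ℕ, N ≤ n ∧ 1 ≤ n ∧ ‖T n x‖ < 1/((k:ℝ)+1) ∧
        ∃ w : H, ‖w‖ < 1/((k:ℝ)+1) ∧ ‖T n w - x‖ < 1/((k:ℝ)+1) := by
  classical
  haveI := UniformSpace.secondCountable_of_separable H
  obtain ⟨B, hBc, -, hBbasis⟩ := TopologicalSpace.exists_countable_basis H
  haveI := hBc.to_subtype
  set η : ℕ → ℝ := fun k => 1/((k:ℝ)+1) with hηdef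
  have hη : ∀ k, 0 < η k := fun k => by positivity
  set G : ℕ → ℕ → Set H := fun k N =>
    {x | ∃ n : ℕ, N ≤ n ∧ 1 ≤ n ∧ ‖T n x‖ < η k ∧ ∃ w : H, ‖w‖ < η k ∧ ‖T n w - x‖ < η k}
    with hGdef
  set D : B → Set H := fun s =>
    if (s : Set H).Nonempty then ⋃ n : ℕ, ⋃ (_ : 1 ≤ n), (T n) ⁻¹' (s : Set H) else Set.univ
    with hDdef
  have hGopen : ∀ k N, IsOpen (G k N) := by
    intro k N
    rw [isOpen_iff_mem_nhds]
    rintro x ⟨n, hnN, hn1, hTx, w, hw, hTw⟩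
    have hO : IsOpen ({y : H | ‖T n y‖ < η k} ∩ {y : H | ‖T n w - y‖ < η k}) := by
      apply IsOpen.inter
      · exact isOpen_lt ((T n).continuous.norm) continuous_const
      · exact isOpen_lt ((continuous_const.sub continuous_id).norm) continuous_const
    have hxO : x ∈ ({y : H | ‖T n y‖ < η k} ∩ {y : H | ‖T n w - y‖ < η k}) := ⟨hTx, hTw⟩
    refine Filter.mem_of_superset (hO.mem_nhds hxO) ?_
    rintro y ⟨hy1, hy2⟩
    exact ⟨n, hnN, hn1, hy1, w, hw, hy2⟩
  have hGdense : ∀ k N, Dense (G k N) := by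
    intro k N
    rw [dense_iff_inter_open]
    intro S hS hSne
    obtain ⟨a, haS⟩ := hSne
    obtain ⟨r, hr, hrS⟩ := Metric.isOpen_iff.1 hS a haS
    set δ : ℝ := min r (η k / 2) with hδdef
    have hδ : 0 < δ := lt_min hr (by positivity)
    obtain ⟨n, hnN, hn1, h1, h2'⟩ := seqCondII_large T h2 N (ball a δ) (ball a δ)
      (ball 0 (η k)) isOpen_ball isOpen_ball ⟨a, mem_ball_self hδ⟩ ⟨a, mem_ball_self hδ⟩
      (ball_mem_nhds _ (hη k))
    obtain ⟨c, ⟨u, huU, hcu⟩, hTu⟩ := h1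
    obtain ⟨d, ⟨w, hwW, hdw⟩, hTw⟩ := h2'
    refine ⟨u, hrS (ball_subset_ball (min_le_left _ _) huU), n, hnN, hn1, ?_, w, ?_, ?_⟩
    · rw [hcu]; exact mem_ball_zero_iff.1 hTu
    · exact mem_ball_zero_iff.1 hwW
    · have h1' : dist (T n w) a < δ := by rw [hdw]; exact mem_ball.1 hTw
      have h2'' : dist u a < δ := mem_ball.1 huU
      have hlt : dist (T n w) u < 2 * δ := by
        calc dist (T n w) u ≤ dist (T n w) a + dist a u := dist_triangle _ _ _
          _ < δ + δ := by rw [dist_comm a u]; linarith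
          _ = 2 * δ := by ring
      rw [← dist_eq_norm]
      have hδη : 2 * δ ≤ η k := by
        rw [hδdef]; linarith [min_le_right r (η k / 2)]
      linarith
  have hDopen : ∀ s : B, IsOpen (D s) := by
    intro s
    simp only [hDdef]
    by_cases h : (s : Set H).Nonempty
    · rw [if_pos h]
      exact isOpen_iUnion fun n => isOpen_iUnion fun _ =>
        (hBbasis.isOpen s.2).preimage (T n).continuous
    · rw [if_neg h]; exact isOpen_univ
  have hDdense : ∀ s : B, Dense (D s) := by
    intro s
    simp only [hDdef]
    by_cases h : (s : Set H).Nonempty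
    · rw [if_pos h]
      rw [dense_iff_inter_open]
      intro S hS hSne
      obtain ⟨n, hn1, u, huS, hTu⟩ := seqCondII_trans T h2 S (s : Set H) hS
        (hBbasis.isOpen s.2) hSne h
      exact ⟨u, huS, mem_iUnion.2 ⟨n, mem_iUnion.2 ⟨hn1, hTu⟩⟩⟩
    · rw [if_neg h]; exact dense_univ
  have hbig : Dense (⋂ i : (ℕ × ℕ) ⊕ B, Sum.elim (fun p : ℕ × ℕ => G p.1 p.2) D i) := by
    apply dense_iInter_of_isOpen
    · rintro (⟨k, N⟩ | s)
      · exact hGopen k N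
      · exact hDopen s
    · rintro (⟨k, N⟩ | s)
      · exact hGdense k N
      · exact hDdense s
  obtain ⟨x, hx⟩ := hbig.nonempty
  rw [Set.mem_iInter] at hx
  refine ⟨x, ?_, ?_⟩
  · rw [hBbasis.dense_iff]
    intro o ho hone
    have hxD := hx (Sum.inr ⟨o, ho⟩)
    simp only [Sum.elim_inr] at hxD
    simp only [hDdef] at hxD; rw [if_pos hone] at hxD
    obtain ⟨n, hn⟩ := mem_iUnion.1 hxD
    obtain ⟨hn1, hTx⟩ := mem_iUnion.1 hn
    exact ⟨T n x, hTx, n, hn1, rfl⟩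
  · intro k N
    have hxG := hx (Sum.inl (k, N))
    simp only [Sum.elim_inl] at hxG
    exact hxG

/-- Condition (iii) implies condition (ii), using commutativity of the operators. -/
lemma seq_three_to_two (T : ℕ → H →L[ℂ] H)
    (hcomm : ∀ m n : ℕ, 1 ≤ m → 1 ≤ n → (T m) * (T n) = (T n) * (T m))
    (h3 : (∃ x : H, Dense {y : H | ∃ m : ℕ, 1 ≤ m ∧ (T m) x = y}) ∧
      ∀ U W : Set H, IsOpen U → U.Nonempty → W ∈ nhds (0 : H) →
        ∃ n : ℕ, 1 ≤ n ∧ ((T n) '' U ∩ W).Nonempty ∧ ((T n) ⁻¹' U ∩ W).Nonempty) :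
    SeqCondII T := by
  obtain ⟨⟨x, hx⟩, hcond⟩ := h3
  have hcomm' : ∀ m n : ℕ, 1 ≤ m → 1 ≤ n → ∀ v : H, T n (T m v) = T m (T n v) := by
    intro m n hm hn v
    have := ContinuousLinearMap.ext_iff.1 (hcomm m n hm hn) v
    rw [ContinuousLinearMap.mul_apply, ContinuousLinearMap.mul_apply] at this
    exact this.symm
  intro U V W hU hV hUne hVne hW
  obtain ⟨y₁, ⟨m, hm1, hmx⟩, hyU⟩ := hx.exists_mem_open hU hUne
  obtain ⟨y₂, ⟨m', hm'1, hm'x⟩, hyV⟩ := hx.exists_mem_open hV hVne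
  obtain ⟨r, hr, hrU⟩ := Metric.isOpen_iff.1 hU y₁ hyU
  obtain ⟨r', hr', hr'V⟩ := Metric.isOpen_iff.1 hV y₂ hyV
  obtain ⟨ε, hε, hεW⟩ := Metric.mem_nhds_iff.1 hW
  set C : ℝ := max ‖T m‖ ‖T m'‖ with hCdef
  have hC0 : 0 ≤ C := le_trans (norm_nonneg _) (le_max_left _ _)
  set M : ℝ := min (min r r') ε with hMdef
  have hM : 0 < M := lt_min (lt_min hr hr') hε
  set δ : ℝ := M / (C + 1) with hδdef
  have hδ : 0 < δ := by positivity
  have hkey : C * δ < M := by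
    calc C * δ < (C + 1) * δ := by apply mul_lt_mul_of_pos_right (by linarith) hδ
      _ = M := by rw [hδdef]; field_simp
  have hbound : ∀ (p : ℕ) (v : H), ‖T p‖ ≤ C → ‖v‖ ≤ δ → ‖T p v‖ < M := by
    intro p v hp hv
    calc ‖T p v‖ ≤ ‖T p‖ * ‖v‖ := (T p).le_opNorm v
      _ ≤ C * δ := mul_le_mul hp hv (norm_nonneg _) hC0
      _ < M := hkey
  obtain ⟨n, hn1, h1, h2⟩ := hcond (ball x δ) (ball 0 δ) isOpen_ball
    ⟨x, mem_ball_self hδ⟩ (ball_mem_nhds _ hδ)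
  obtain ⟨c, ⟨u, huB, hcu⟩, hTu⟩ := h1
  obtain ⟨w, hwpre, hwB⟩ := h2
  have hTu' : ‖T n u‖ ≤ δ := by rw [hcu]; exact le_of_lt (mem_ball_zero_iff.1 hTu)
  have hu' : ‖u - x‖ ≤ δ := by
    rw [← dist_eq_norm]; exact le_of_lt (mem_ball.1 huB)
  have hw' : ‖w‖ ≤ δ := le_of_lt (mem_ball_zero_iff.1 hwB)
  have hTw' : ‖T n w - x‖ ≤ δ := by
    rw [← dist_eq_norm]; exact le_of_lt (mem_ball.1 hwpre)
  refine ⟨n, hn1, ⟨T n (T m u), ⟨T m u, ?_, rfl⟩, ?_⟩, ⟨T n (T m' w), ⟨T m' w, ?_, rfl⟩, ?_⟩⟩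
  · apply hrU
    rw [mem_ball, dist_eq_norm, ← hmx, ← map_sub]
    exact lt_of_lt_of_le (hbound m (u - x) (le_max_left _ _) hu')
      (le_trans (min_le_left _ _) (min_le_left _ _))
  · apply hεW
    rw [mem_ball_zero_iff, hcomm' m n hm1 hn1]
    exact lt_of_lt_of_le (hbound m (T n u) (le_max_left _ _) hTu') (min_le_right _ _)
  · apply hεW
    rw [mem_ball_zero_iff]
    exact lt_of_lt_of_le (hbound m' w (le_max_right _ _) hw') (min_le_right _ _)
  · apply hr'V
    rw [mem_ball, dist_eq_norm, hcomm' m' n hm'1 hn1, ← hm'x, ← map_sub]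
    exact lt_of_lt_of_le (hbound m' (T n w - x) (le_max_right _ _) hTw')
      (le_trans (min_le_left _ _) (min_le_right _ _))

end SeqCriterionAux

/-- The sequence `(T_n)_{n ≥ 1}` satisfies the hypothesis of the Hypercyclicity
Criterion. -/
def SeqSatisfiesHypercyclicityCriterion
    {H : Type*} [NormedAddCommGroup H] [InnerProductSpace ℂ H]
    (T : ℕ → H →L[ℂ] H) : Prop :=
  ∃ (Y Z : Set H) (n : ℕ → ℕ) (S : ℕ → H → H),
    Dense Y ∧ Dense Z ∧ StrictMono n ∧ (∀ k, 0 < n k) ∧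
    (∀ y ∈ Y, Filter.Tendsto (fun k => (T (n k)) y) Filter.atTop (nhds 0)) ∧
    (∀ z ∈ Z, Filter.Tendsto (fun k => S k z) Filter.atTop (nhds 0) ∧
      Filter.Tendsto (fun k => (T (n k)) (S k z)) Filter.atTop (nhds z))

/-- Corollary 2.9, the three equivalent conditions for a commuting
sequence of operators with dense range. -/
theorem seq_criterion_tfae
    {H : Type*} [NormedAddCommGroup H] [InnerProductSpace ℂ H]
    [CompleteSpace H] [TopologicalSpace.SeparableSpace H]
    (hdim : ¬ FiniteDimensional ℂ H)
    (T : ℕ → H →L[ℂ] H)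
    (hrange : ∀ m, 1 ≤ m → DenseRange (T m))
    (hcomm : ∀ m n : ℕ, 1 ≤ m → 1 ≤ n → (T m) * (T n) = (T n) * (T m)) :
    List.TFAE
      [SeqSatisfiesHypercyclicityCriterion T,
       ∀ U V W : Set H, IsOpen U → IsOpen V → U.Nonempty → V.Nonempty →
         W ∈ nhds (0 : H) →
         ∃ n : ℕ, 1 ≤ n ∧ ((T n) '' U ∩ W).Nonempty ∧
           ((T n) '' W ∩ V).Nonempty,
       (∃ x : H, Dense {y : H | ∃ m : ℕ, 1 ≤ m ∧ (T m) x = y}) ∧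
         ∀ U W : Set H, IsOpen U → U.Nonempty → W ∈ nhds (0 : H) →
           ∃ n : ℕ, 1 ≤ n ∧ ((T n) '' U ∩ W).Nonempty ∧
             ((T n) ⁻¹' U ∩ W).Nonempty] := by
  classical
  haveI hnt : Nontrivial H := by
    by_contra hn
    rw [not_nontrivial_iff_subsingleton] at hn
    exact hdim inferInstance
  tfae_have 1 → 2 := by
    rintro ⟨Y, Z, ν, S, hY, hZ, hmono, hpos, hTY, hSZ⟩
    intro U V W hU hV hUne hVne hW
    obtain ⟨y, hyY, hyU⟩ := hY.exists_mem_open hU hUne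
    obtain ⟨z, hzZ, hzV⟩ := hZ.exists_mem_open hV hVne
    have h1 : ∀ᶠ k in Filter.atTop, T (ν k) y ∈ W := (hTY y hyY) hW
    have h2 : ∀ᶠ k in Filter.atTop, S k z ∈ W := (hSZ z hzZ).1 hW
    have h3 : ∀ᶠ k in Filter.atTop, T (ν k) (S k z) ∈ V :=
      (hSZ z hzZ).2 (hV.mem_nhds hzV)
    obtain ⟨k, hka, hkb, hkc⟩ := (h1.and (h2.and h3)).exists
    exact ⟨ν k, hpos k, ⟨T (ν k) y, ⟨y, hyU, rfl⟩, hka⟩,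
      ⟨T (ν k) (S k z), ⟨S k z, hkb, rfl⟩, hkc⟩⟩
  tfae_have 2 → 3 := by
    intro h2
    refine ⟨?_, ?_⟩
    · obtain ⟨x, hd, -⟩ := seqCondII_baire T h2
      exact ⟨x, hd⟩
    · intro U W hU hUne hW
      obtain ⟨n, hn1, h1, hb⟩ := h2 U U W hU hU hUne hUne hW
      obtain ⟨b, ⟨w, hwW, hwb⟩, hbU⟩ := hb
      exact ⟨n, hn1, h1, ⟨w, by rw [Set.mem_preimage, hwb]; exact hbU, hwW⟩⟩
  tfae_have 3 → 1 := by
    intro h3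
    have hcomm' : ∀ m n : ℕ, 1 ≤ m → 1 ≤ n → ∀ v : H, T n (T m v) = T m (T n v) := by
      intro m n hm hn v
      have := ContinuousLinearMap.ext_iff.1 (hcomm m n hm hn) v
      rw [ContinuousLinearMap.mul_apply, ContinuousLinearMap.mul_apply] at this
      exact this.symm
    have h2 : SeqCondII T := seq_three_to_two T hcomm h3
    obtain ⟨x, hxdense, hxG⟩ := seqCondII_baire T h2
    choose F hFge hF1 hFx w hw1 hw2 using hxG
    -- recursively defined strictly increasing sequence of indices
    obtain ⟨ν, hν0, hνs⟩ : ∃ ν : ℕ → ℕ, ν 0 = F 0 1 ∧ ∀ k, ν (k+1) = F (k+1) (ν k + 1) :=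
      ⟨fun k => Nat.rec (F 0 1) (fun k' ih => F (k'+1) (ih + 1)) k, rfl, fun k => rfl⟩
    have hν1 : ∀ k, 1 ≤ ν k := by
      intro k
      cases k with
      | zero => rw [hν0]; exact hF1 0 1
      | succ k' => rw [hνs]; exact hF1 _ _
    have hmono : StrictMono ν := by
      apply strictMono_nat_of_lt_succ
      intro k
      rw [hνs]
      exact lt_of_lt_of_le (Nat.lt_succ_self _) (hFge (k+1) (ν k + 1))
    have hνx : ∀ k, ‖T (ν k) x‖ < 1/((k:ℝ)+1) := by
      intro k
      cases k with
      | zero => rw [hν0]; exact hFx 0 1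
      | succ k' => rw [hνs]; exact hFx _ _
    -- the approximate preimages
    obtain ⟨ω, hω0, hωs⟩ : ∃ ω : ℕ → H, ω 0 = w 0 1 ∧ ∀ k, ω (k+1) = w (k+1) (ν k + 1) :=
      ⟨fun k => Nat.casesOn k (w 0 1) (fun k' => w (k'+1) (ν k' + 1)), rfl, fun k => rfl⟩
    have hω1 : ∀ k, ‖ω k‖ < 1/((k:ℝ)+1) := by
      intro k
      cases k with
      | zero => rw [hω0]; exact hw1 0 1
      | succ k' => rw [hωs]; exact hw1 _ _
    have hω2 : ∀ k, ‖T (ν k) (ω k) - x‖ < 1/((k:ℝ)+1) := by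
      intro k
      cases k with
      | zero => rw [hω0, hν0]; exact hw2 0 1
      | succ k' => rw [hωs, hνs]; exact hw2 _ _
    -- the three convergence facts
    have htend0 : Filter.Tendsto (fun k => T (ν k) x) Filter.atTop (nhds 0) :=
      squeeze_zero_norm (fun k => (hνx k).le) tendsto_one_div_add_atTop_nhds_zero_nat
    have hωtend : Filter.Tendsto ω Filter.atTop (nhds 0) :=
      squeeze_zero_norm (fun k => (hω1 k).le) tendsto_one_div_add_atTop_nhds_zero_nat
    have hTωtend : Filter.Tendsto (fun k => T (ν k) (ω k)) Filter.atTop (nhds x) :=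
      tendsto_iff_norm_sub_tendsto_zero.2
        (squeeze_zero (fun k => norm_nonneg _) (fun k => (hω2 k).le)
          tendsto_one_div_add_atTop_nhds_zero_nat)
    set Y : Set H := {y : H | ∃ m : ℕ, 1 ≤ m ∧ (T m) x = y} with hYdef
    set S : ℕ → H → H := fun k z =>
      if h : ∃ m : ℕ, 1 ≤ m ∧ (T m) x = z then T (h.choose) (ω k) else 0 with hSdef
    have hSk : ∀ (k : ℕ) (z : H) (hz : ∃ m : ℕ, 1 ≤ m ∧ (T m) x = z),
        S k z = T (hz.choose) (ω k) := by
      intro k z hz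
      rw [hSdef]
      exact dif_pos hz
    refine ⟨Y, Y, ν, S, hxdense, hxdense, hmono, hν1, ?_, ?_⟩
    · rintro y ⟨m, hm1, rfl⟩
      have heq : (fun k => T (ν k) (T m x)) = fun k => T m (T (ν k) x) :=
        funext fun k => hcomm' m (ν k) hm1 (hν1 k) x
      rw [heq]
      have := ((T m).continuous.tendsto 0).comp htend0
      rwa [map_zero] at this
    · intro z hz
      have hm1 := hz.choose_spec.1
      have hmz := hz.choose_spec.2
      constructor
      · have heq : (fun k => S k z) = fun k => T (hz.choose) (ω k) :=
          funext fun k => hSk k z hz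
        rw [heq]
        have := ((T hz.choose).continuous.tendsto 0).comp hωtend
        rwa [map_zero] at this
      · have heq : (fun k => T (ν k) (S k z)) = fun k => T (hz.choose) (T (ν k) (ω k)) := by
          funext k
          rw [hSk k z hz, hcomm' hz.choose (ν k) hm1 (hν1 k)]
        rw [heq]
        have := ((T hz.choose).continuous.tendsto x).comp hTωtend
        rwa [hmz] at this
  tfae_finish
end

section
/- Let H be a separable infinite-dimensional complex Hilbert space and T : H → H a bounded linear operator. Then T satisfies the hypothesis of the Hypercyclicity Criterion if and only if T is hereditarily hypercyclic with respect to some strictly increasing sequence (n_k) of positive integers. -/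
open Filter Topology Set Function

/-- `T` is hereditarily hypercyclic with respect to the sequence `n`: for every
subsequence `(n (k m))_m`, the sequence of operators `(T ^ n (k m))_m` is
hypercyclic. -/
def HereditarilyHypercyclic
    {H : Type*} [NormedAddCommGroup H] [InnerProductSpace ℂ H]
    (T : H →L[ℂ] H) (n : ℕ → ℕ) : Prop :=
  ∀ k : ℕ → ℕ, StrictMono k →
    ∃ x : H, Dense (Set.range fun m : ℕ => (T ^ n (k m)) x)

section Dynamics

variable {X : Type*} [TopologicalSpace X]

def IsTopologicallyMixing (A : ℕ → X → X) : Prop :=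
  ∀ ⦃U V : Set X⦄, IsOpen U → U.Nonempty → IsOpen V → V.Nonempty →
    ∀ᶠ m in atTop, (U ∩ A m ⁻¹' V).Nonempty

theorem IsTopologicallyMixing.comp_tendsto {A : ℕ → X → X} (h : IsTopologicallyMixing A)
    {k : ℕ → ℕ} (hk : Tendsto k atTop atTop) : IsTopologicallyMixing fun m => A (k m) :=
  fun _ _ hU hU' hV hV' => hk.eventually (h hU hU' hV hV')

theorem exists_forall_frequently_mem_of_frequently_transitive [BaireSpace X]
    [SecondCountableTopology X] [Nonempty X] {A : ℕ → X → X} (hA : ∀ m, Continuous (A m))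
    (h : ∀ ⦃U V : Set X⦄, IsOpen U → U.Nonempty → IsOpen V → V.Nonempty →
      ∃ᶠ m in atTop, (U ∩ A m ⁻¹' V).Nonempty) :
    ∃ x, ∀ ⦃V : Set X⦄, IsOpen V → V.Nonempty → ∃ᶠ m in atTop, A m x ∈ V := by
  obtain ⟨b, hbc, hbne, hb⟩ := TopologicalSpace.exists_countable_basis X
  have : Countable b := hbc.to_subtype
  let G : b × ℕ → Set X := fun p => ⋃ m ≥ p.2, A m ⁻¹' p.1
  have hG_open : ∀ p, IsOpen (G p) := fun p =>
    isOpen_biUnion fun m _ => (hb.isOpen p.1.2).preimage (hA m)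
  have hG_dense : ∀ p, Dense (G p) := fun p => dense_iff_inter_open.2 fun U hU hU' => by
    have hB : (p.1 : Set X).Nonempty := nonempty_iff_ne_empty.2 fun he => hbne (he ▸ p.1.2)
    obtain ⟨m, hm, u, hu⟩ := frequently_atTop.1 (h hU hU' (hb.isOpen p.1.2) hB) p.2
    exact ⟨u, hu.1, mem_biUnion hm hu.2⟩
  obtain ⟨x, hx⟩ := (dense_iInter_of_isOpen hG_open hG_dense).nonempty
  refine ⟨x, fun V hV ⟨v, hv⟩ => frequently_atTop.2 fun N => ?_⟩
  obtain ⟨o, hob, -, hoV⟩ := hb.exists_subset_of_mem_open hv hV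
  obtain ⟨m, hm, hxm⟩ := mem_iUnion₂.1 (mem_iInter.1 hx (⟨o, hob⟩, N))
  exact ⟨m, hm, hoV hxm⟩

theorem IsTopologicallyMixing.exists_forall_frequently_mem [BaireSpace X]
    [SecondCountableTopology X] [Nonempty X] {A : ℕ → X → X} (h : IsTopologicallyMixing A)
    (hA : ∀ m, Continuous (A m)) :
    ∃ x, ∀ ⦃V : Set X⦄, IsOpen V → V.Nonempty → ∃ᶠ m in atTop, A m x ∈ V :=
  exists_forall_frequently_mem_of_frequently_transitive hA
    fun _ _ hU hU' hV hV' => (h hU hU' hV hV').frequently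

theorem dense_range_of_forall_frequently_mem {A : ℕ → X → X} {x : X}
    (hx : ∀ ⦃V : Set X⦄, IsOpen V → V.Nonempty → ∃ᶠ m in atTop, A m x ∈ V) :
    Dense (range fun m => A m x) :=
  dense_iff_inter_open.2 fun _ hV hV' =>
    let ⟨m, hm⟩ := (hx hV hV').exists
    ⟨A m x, hm, m, rfl⟩

theorem denseRange_of_dense_orbit [T1Space X] [∀ x : X, (𝓝[≠] x).NeBot] {f : X → X} {x : X}
    (hx : Dense (range fun q => f^[q] x)) : DenseRange f := by
  refine (hx.sdiff_singleton x).mono ?_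
  rintro _ ⟨⟨_ | q, rfl⟩, hq⟩
  · exact absurd rfl hq
  · exact ⟨f^[q] x, (iterate_succ_apply' f q x).symm⟩

theorem DenseRange.iterate {f : X → X} (hf : DenseRange f) (hc : Continuous f) :
    ∀ q, DenseRange f^[q]
  | 0 => denseRange_id
  | q + 1 => by rw [iterate_succ']; exact hf.comp (hf.iterate hc q) hc

/-- Any point of the dense orbit lying in `U` is also universal for the iterates `f^[p m]`,
because `f^[q]` has dense range and commutes with them. -/
theorem exists_nonempty_inter_preimage_iterate_of_dense [T1Space X] [∀ x : X, (𝓝[≠] x).NeBot]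
    {f : X → X} (hf : Continuous f) {p : ℕ → ℕ} {x : X}
    (hx : Dense (range fun m => f^[p m] x))
    {U V : Set X} (hU : IsOpen U) (hU' : U.Nonempty) (hV : IsOpen V) (hV' : V.Nonempty) :
    ∃ m, (U ∩ f^[p m] ⁻¹' V).Nonempty := by
  have horbit : Dense (range fun q => f^[q] x) :=
    hx.mono (range_comp_subset_range p fun q => f^[q] x)
  obtain ⟨_, ⟨q, rfl⟩, hqU⟩ := horbit.exists_mem_open hU hU'
  have himage : Dense (f^[q] '' range fun m => f^[p m] x) :=
    ((denseRange_of_dense_orbit horbit).iterate hf q).dense_image (hf.iterate q) hx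
  obtain ⟨_, ⟨_, ⟨m, rfl⟩, rfl⟩, hmV⟩ := himage.exists_mem_open hV hV'
  refine ⟨m, f^[q] x, hqU, ?_⟩
  rwa [mem_preimage, Commute.iterate_iterate_self]

end Dynamics

theorem tendsto_of_forall_mem_ball_one_div_succ {α : Type*} [PseudoMetricSpace α] {a : ℕ → α}
    {L : α} (h : ∀ j : ℕ, a j ∈ Metric.ball L (1 / (j + 1))) : Tendsto a atTop (𝓝 L) :=
  tendsto_iff_dist_tendsto_zero.2 <|
    squeeze_zero (fun _ => dist_nonneg) (fun j => (h j).le) tendsto_one_div_add_atTop_nhds_zero_nat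

section Operators

variable {H : Type*} [NormedAddCommGroup H] [InnerProductSpace ℂ H] {T : H →L[ℂ] H}

theorem SatisfiesHypercyclicityCriterion.exists_isTopologicallyMixing
    (hT : SatisfiesHypercyclicityCriterion T) :
    ∃ n : ℕ → ℕ, StrictMono n ∧ (∀ k, 0 < n k) ∧
      IsTopologicallyMixing fun k => ⇑(T ^ n k) := by
  obtain ⟨Y, Z, n, S, hY, hZ, hn, hpos, hTY, hSZ⟩ := hT
  refine ⟨n, hn, hpos, fun U V hU hU' hV hV' => ?_⟩
  obtain ⟨y, hyY, hyU⟩ := hY.exists_mem_open hU hU'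
  obtain ⟨z, hzZ, hzV⟩ := hZ.exists_mem_open hV hV'
  obtain ⟨hS, hTS⟩ := hSZ z hzZ
  have hy : Tendsto (fun k => y + S k z) atTop (𝓝 y) := by
    simpa using tendsto_const_nhds.add hS
  have hz : Tendsto (fun k => (T ^ n k) (y + S k z)) atTop (𝓝 z) := by
    simpa using (hTY y hyY).add hTS
  filter_upwards [hy.eventually_mem (hU.mem_nhds hyU), hz.eventually_mem (hV.mem_nhds hzV)]
    with k hkU hkV
  exact ⟨_, hkU, hkV⟩

theorem HereditarilyHypercyclic.isTopologicallyMixing [Nontrivial H] {n : ℕ → ℕ}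
    (hT : HereditarilyHypercyclic T n) : IsTopologicallyMixing fun k => ⇑(T ^ n k) := by
  intro U V hU hU' hV hV'
  by_contra hbad
  obtain ⟨k, hk, hkbad⟩ := extraction_of_frequently_atTop (not_eventually.1 hbad)
  obtain ⟨x, hx⟩ := hT k hk
  simp only [FunLike.coe_pow_eq_iterate] at hx hkbad
  obtain ⟨m, hm⟩ :=
    exists_nonempty_inter_preimage_iterate_of_dense T.continuous hx hU hU' hV hV'
  exact hkbad m hm

theorem IsTopologicallyMixing.hereditarilyHypercyclic [CompleteSpace H]
    [TopologicalSpace.SeparableSpace H] {n : ℕ → ℕ}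
    (h : IsTopologicallyMixing fun k => ⇑(T ^ n k)) : HereditarilyHypercyclic T n := by
  intro k hk
  obtain ⟨x, hx⟩ := (h.comp_tendsto hk.tendsto_atTop).exists_forall_frequently_mem
    fun _ => (T ^ _).continuous
  exact ⟨x, dense_range_of_forall_frequently_mem hx⟩

/-- `S k` sends `T ^ q x` to `T ^ q (w k)`, which works because `T ^ q` commutes with
`T ^ n k`. -/
theorem satisfiesHypercyclicityCriterion_of_dense_orbit {x : H}
    (hx : Dense (range fun q => (T ^ q) x)) {n : ℕ → ℕ} (hn : StrictMono n)
    (hpos : ∀ k, 0 < n k)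
    {w : ℕ → H} (hx0 : Tendsto (fun k => (T ^ n k) x) atTop (𝓝 0))
    (hw0 : Tendsto w atTop (𝓝 0)) (hwx : Tendsto (fun k => (T ^ n k) (w k)) atTop (𝓝 x)) :
    SatisfiesHypercyclicityCriterion T := by
  have hcomm (a b : ℕ) (y : H) : (T ^ a) ((T ^ b) y) = (T ^ b) ((T ^ a) y) :=
    DFunLike.congr_fun (Commute.pow_pow_self T a b).eq y
  set q := invFun fun q => (T ^ q) x
  refine ⟨_, _, n, fun k z => (T ^ q z) (w k), hx, hx, hn, hpos, ?_, fun z hz => ⟨?_, ?_⟩⟩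
  · rintro _ ⟨p, rfl⟩
    simp_rw [hcomm _ p]
    simpa only [comp_def, map_zero] using ((T ^ p).continuous.tendsto 0).comp hx0
  · simpa only [comp_def, map_zero] using ((T ^ q z).continuous.tendsto 0).comp hw0
  · have hqz : (T ^ q z) x = z := invFun_eq hz
    simp_rw [hcomm _ (q z)]
    simpa only [comp_def, hqz] using ((T ^ q z).continuous.tendsto x).comp hwx

theorem IsTopologicallyMixing.satisfiesHypercyclicityCriterion [CompleteSpace H]
    [TopologicalSpace.SeparableSpace H] {n : ℕ → ℕ} (hn : StrictMono n)
    (hpos : ∀ k, 0 < n k) (h : IsTopologicallyMixing fun k => ⇑(T ^ n k)) :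
    SatisfiesHypercyclicityCriterion T := by
  obtain ⟨x, hx⟩ := h.exists_forall_frequently_mem fun _ => (T ^ _).continuous
  have hball : ∀ (y : H) (j : ℕ), (Metric.ball y (1 / (j + 1))).Nonempty := fun y j =>
    Metric.nonempty_ball.2 Nat.one_div_pos_of_nat
  have hsmall : ∀ j : ℕ, ∃ᶠ m in atTop, (T ^ n m) x ∈ Metric.ball 0 (1 / (j + 1)) ∧
      (Metric.ball 0 (1 / (j + 1)) ∩ (T ^ n m) ⁻¹' Metric.ball x (1 / (j + 1))).Nonempty :=
    fun j => (hx Metric.isOpen_ball (hball 0 j)).and_eventually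
      (h Metric.isOpen_ball (hball 0 j) Metric.isOpen_ball (hball x j))
  obtain ⟨k, hk, hgood⟩ := extraction_forall_of_frequently hsmall
  choose w hw0 hwx using fun j => (hgood j).2
  have horbit : Dense (range fun q => (T ^ q) x) :=
    (dense_range_of_forall_frequently_mem hx).mono (range_comp_subset_range n fun q => (T ^ q) x)
  exact satisfiesHypercyclicityCriterion_of_dense_orbit horbit (hn.comp hk) (fun _ => hpos _)
    (tendsto_of_forall_mem_ball_one_div_succ fun j => (hgood j).1)
    (tendsto_of_forall_mem_ball_one_div_succ hw0) (tendsto_of_forall_mem_ball_one_div_succ hwx)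

end Operators

/-- the Hypercyclicity Criterion is equivalent to hereditary
hypercyclicity with respect to some strictly increasing sequence of positive
integers. -/
theorem criterion_iff_hereditarily_hypercyclic
    {H : Type*} [NormedAddCommGroup H] [InnerProductSpace ℂ H]
    [CompleteSpace H] [TopologicalSpace.SeparableSpace H]
    (hdim : ¬ FiniteDimensional ℂ H)
    (T : H →L[ℂ] H) :
    SatisfiesHypercyclicityCriterion T ↔
    ∃ n : ℕ → ℕ, StrictMono n ∧ (∀ k, 0 < n k) ∧
      HereditarilyHypercyclic T n := by
  have : Nontrivial H := not_subsingleton_iff_nontrivial.1 fun _ => hdim inferInstance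
  constructor
  · intro hT
    obtain ⟨n, hn, hpos, hmix⟩ := hT.exists_isTopologicallyMixing
    exact ⟨n, hn, hpos, hmix.hereditarilyHypercyclic⟩
  · rintro ⟨n, hn, hpos, hT⟩
    exact hT.isTopologicallyMixing.satisfiesHypercyclicityCriterion hn hpos
end

section
/- Let H be a separable infinite-dimensional complex Hilbert space and T : H → H a bounded linear operator. Then T satisfies the hypothesis of the Hypercyclicity Criterion if and only if there exist a dense subset Y of H and a strictly increasing sequence (n_k) of positive integers such that the sequence of operators (T^{n_k})_k is hypercyclic and T^{n_k} y → 0 for every y ∈ Y. -/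
/-!
Forward direction: the criterion makes every set `⋃ k, (T ^ n k)⁻¹' V` dense (perturb a point
`y ∈ Y` by `S k z`), so by Baire's theorem a countable intersection of them, over a basis of open
sets, contains a point whose orbit is dense.

Backward direction: if `x` has a dense orbit, `x` is a cluster point of its own orbit, since a
nontrivial vector space has no isolated points. Approximating `x` by `y_j ∈ Y`, the vectors
`w_j = x - y_j` tend to `0` while `T ^ n k` maps each of them arbitrarily close to `x` along a
subsequence; a diagonal extraction gives `S_k (T ^ j x) = T ^ j w_k` on the dense set of all
`T ^ j x`.
-/

open Filter Topology Set

theorem exists_denseRange_of_dense_iUnion_preimage {X Y : Type*} [TopologicalSpace X]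
    [BaireSpace X] [Nonempty X] [TopologicalSpace Y] [SecondCountableTopology Y] {f : ℕ → X → Y}
    (hf : ∀ k, Continuous (f k))
    (hdense : ∀ V : Set Y, IsOpen V → V.Nonempty → Dense (⋃ k, f k ⁻¹' V)) :
    ∃ x, DenseRange fun k => f k x := by
  obtain ⟨b, hbc, hbne, hb⟩ := TopologicalSpace.exists_countable_basis Y
  have hopen (V : Set Y) (hV : V ∈ b) : IsOpen (⋃ k, f k ⁻¹' V) :=
    isOpen_iUnion fun k => (hb.isOpen hV).preimage (hf k)
  have hne (V : Set Y) (hV : V ∈ b) : V.Nonempty :=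
    nonempty_iff_ne_empty.2 fun h => hbne (h ▸ hV)
  obtain ⟨x, hx⟩ := (dense_biInter_of_isOpen hopen hbc
    fun V hV => hdense V (hb.isOpen hV) (hne V hV)).nonempty
  refine ⟨x, hb.dense_iff.2 fun V hV _ => ?_⟩
  obtain ⟨k, hk⟩ := mem_iUnion.1 (mem_iInter₂.1 hx V hV)
  exact ⟨f k x, hk, mem_range_self k⟩

theorem dense_iUnion_preimage_of_hypercyclicityCriterion {M F : Type*} [AddMonoid M]
    [TopologicalSpace M] [ContinuousAdd M] [FunLike F M M] [AddMonoidHomClass F M M] {A : ℕ → F}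
    {Y Z : Set M} {S : ℕ → M → M} (hY : Dense Y) (hZ : Dense Z)
    (hY0 : ∀ y ∈ Y, Tendsto (fun k => A k y) atTop (𝓝 0))
    (hS0 : ∀ z ∈ Z, Tendsto (fun k => S k z) atTop (𝓝 0))
    (hAS : ∀ z ∈ Z, Tendsto (fun k => A k (S k z)) atTop (𝓝 z))
    {V : Set M} (hV : IsOpen V) (hVne : V.Nonempty) : Dense (⋃ k, A k ⁻¹' V) := by
  refine dense_iff_inter_open.2 fun U hU hUne => ?_
  obtain ⟨y, hyU, hyY⟩ := hY.inter_open_nonempty U hU hUne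
  obtain ⟨z, hzV, hzZ⟩ := hZ.inter_open_nonempty V hV hVne
  have hnear_y : Tendsto (fun k => y + S k z) atTop (𝓝 y) := by
    simpa only [add_zero] using tendsto_const_nhds.add (hS0 z hzZ)
  have hnear_z : Tendsto (fun k => A k (y + S k z)) atTop (𝓝 z) := by
    simpa only [map_add, zero_add] using (hY0 y hyY).add (hAS z hzZ)
  obtain ⟨k, hkU, hkV⟩ :=
    ((hnear_y.eventually (hU.mem_nhds hyU)).and (hnear_z.eventually (hV.mem_nhds hzV))).exists
  exact ⟨y + S k z, hkU, mem_iUnion.2 ⟨k, hkV⟩⟩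

theorem exists_strictMono_tendsto_diagonal {X : Type*} {l : Filter X} [l.IsCountablyGenerated]
    {u : ℕ → ℕ → X} (hu : ∀ j, Tendsto (u j) atTop l) :
    ∃ ψ : ℕ → ℕ, StrictMono ψ ∧ Tendsto (fun j => u j (ψ j)) atTop l := by
  obtain ⟨s, hs⟩ := l.exists_antitone_basis
  obtain ⟨ψ, hψ, hψs⟩ := extraction_forall_of_eventually fun j => (hu j).eventually (hs.mem j)
  exact ⟨ψ, hψ, hs.tendsto hψs⟩

theorem exists_strictMono_tendsto_zero_apply_tendsto {M F : Type*} [AddGroup M]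
    [TopologicalSpace M] [IsTopologicalAddGroup M] [FirstCountableTopology M] [FunLike F M M]
    [AddMonoidHomClass F M M] {A : ℕ → F} {Y : Set M} (hY : Dense Y)
    (hY0 : ∀ y ∈ Y, Tendsto (fun k => A k y) atTop (𝓝 0)) {x : M}
    (hx : MapClusterPt x atTop fun k => A k x) :
    ∃ ψ : ℕ → ℕ, StrictMono ψ ∧ ∃ w : ℕ → M,
      Tendsto w atTop (𝓝 0) ∧ Tendsto (fun j => A (ψ j) (w j)) atTop (𝓝 x) := by
  obtain ⟨φ, hφ, hφx⟩ := hx.tendsto_subseq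
  obtain ⟨y, hyY, hyx⟩ := mem_closure_iff_seq_limit.1 (hY x)
  have hdiff (j : ℕ) : Tendsto (fun i => A (φ i) (x - y j)) atTop (𝓝 x) := by
    simpa only [Function.comp_def, map_sub, sub_zero] using
      hφx.sub ((hY0 _ (hyY j)).comp hφ.tendsto_atTop)
  obtain ⟨ψ, hψ, hψx⟩ := exists_strictMono_tendsto_diagonal hdiff
  refine ⟨φ ∘ ψ, hφ.comp hψ, fun j => x - y j, ?_, hψx⟩
  simpa only [sub_self] using (tendsto_const_nhds (x := x)).sub hyx

theorem DenseRange.mapClusterPt_atTop {X : Type*} [TopologicalSpace X] [T1Space X]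
    [∀ x : X, NeBot (𝓝[≠] x)] {u : ℕ → X} (hu : DenseRange u) (x : X) :
    MapClusterPt x atTop u := by
  refine mapClusterPt_atTop_iff_forall_mem_closure.2 fun K => ?_
  have htail : Dense (range u \ u '' Iio K) := hu.sdiff_finite ((finite_Iio K).image u)
  refine htail.mono ?_ x
  rintro _ ⟨⟨k, rfl⟩, hk⟩
  exact ⟨k, mem_Ici.2 (not_lt.1 fun hkK => hk ⟨k, hkK, rfl⟩), rfl⟩

theorem DenseRange.mapClusterPt_atTop_of_normedSpace {E : Type*} [NormedAddCommGroup E]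
    [NormedSpace ℝ E] {u : ℕ → E} (hu : DenseRange u) (x : E) : MapClusterPt x atTop u := by
  cases subsingleton_or_nontrivial E
  · rw [Subsingleton.elim u fun _ => x]
    exact tendsto_const_nhds.mapClusterPt
  · exact hu.mapClusterPt_atTop x

theorem satisfiesHypercyclicityCriterion_of_forall_mem_exists {H : Type*} [NormedAddCommGroup H]
    [InnerProductSpace ℂ H] {T : H →L[ℂ] H} {Y Z : Set H} {n : ℕ → ℕ} (hY : Dense Y)
    (hZ : Dense Z) (hn : StrictMono n) (hpos : ∀ k, 0 < n k)
    (hY0 : ∀ y ∈ Y, Tendsto (fun k => (T ^ n k) y) atTop (𝓝 0))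
    (hZS : ∀ z ∈ Z, ∃ s : ℕ → H,
      Tendsto s atTop (𝓝 0) ∧ Tendsto (fun k => (T ^ n k) (s k)) atTop (𝓝 z)) :
    SatisfiesHypercyclicityCriterion T := by
  choose! S hS0 hTS using hZS
  exact ⟨Y, Z, n, fun k z => S z k, hY, hZ, hn, hpos, hY0, fun z hz => ⟨hS0 z hz, hTS z hz⟩⟩

theorem criterion_iff_hypercyclic_subsequence_tending_to_zero_general
    {H : Type*} [NormedAddCommGroup H] [InnerProductSpace ℂ H]
    [CompleteSpace H] [TopologicalSpace.SeparableSpace H]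
    (T : H →L[ℂ] H) :
    SatisfiesHypercyclicityCriterion T ↔
    ∃ (Y : Set H) (n : ℕ → ℕ), Dense Y ∧ StrictMono n ∧ (∀ k, 0 < n k) ∧
      (∃ x : H, Dense (Set.range fun k : ℕ => (T ^ n k) x)) ∧
      (∀ y ∈ Y, Filter.Tendsto (fun k => (T ^ n k) y) Filter.atTop (nhds 0)) := by
  constructor
  · rintro ⟨Y, Z, n, S, hY, hZ, hn, hpos, hY0, hZS⟩
    have := UniformSpace.secondCountable_of_separable H
    refine ⟨Y, n, hY, hn, hpos, ?_, hY0⟩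
    exact exists_denseRange_of_dense_iUnion_preimage (fun k => (T ^ n k).continuous)
      fun V hV hVne => dense_iUnion_preimage_of_hypercyclicityCriterion hY hZ hY0
        (fun z hz => (hZS z hz).1) (fun z hz => (hZS z hz).2) hV hVne
  · rintro ⟨Y, n, hY, hn, hpos, ⟨x, hx⟩, hY0⟩
    obtain ⟨ψ, hψ, w, hw0, hwx⟩ :=
      exists_strictMono_tendsto_zero_apply_tendsto hY hY0
        (DenseRange.mapClusterPt_atTop_of_normedSpace hx x)
    refine satisfiesHypercyclicityCriterion_of_forall_mem_exists hY
      (hx.mono (range_comp_subset_range n fun j => (T ^ j) x)) (hn.comp hψ) (fun k => hpos _)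
      (fun y hy => (hY0 y hy).comp hψ.tendsto_atTop) ?_
    rintro _ ⟨j, rfl⟩
    have hcomm (a : ℕ) (v : H) : (T ^ a) ((T ^ j) v) = (T ^ j) ((T ^ a) v) :=
      DFunLike.congr_fun (Commute.pow_pow_self T a j) v
    refine ⟨fun k => (T ^ j) (w k), ?_, ?_⟩
    · simpa only [Function.comp_def, map_zero] using ((T ^ j).continuous.tendsto 0).comp hw0
    · simpa only [Function.comp_def, hcomm] using ((T ^ j).continuous.tendsto x).comp hwx

/-- Proposition 2.12, (i) ⇔ (ii). -/
theorem criterion_iff_hypercyclic_subsequence_tending_to_zero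
    {H : Type*} [NormedAddCommGroup H] [InnerProductSpace ℂ H]
    [CompleteSpace H] [TopologicalSpace.SeparableSpace H]
    (hdim : ¬ FiniteDimensional ℂ H)
    (T : H →L[ℂ] H) :
    SatisfiesHypercyclicityCriterion T ↔
    ∃ (Y : Set H) (n : ℕ → ℕ), Dense Y ∧ StrictMono n ∧ (∀ k, 0 < n k) ∧
      (∃ x : H, Dense (Set.range fun k : ℕ => (T ^ n k) x)) ∧
      (∀ y ∈ Y, Filter.Tendsto (fun k => (T ^ n k) y) Filter.atTop (nhds 0)) :=
  criterion_iff_hypercyclic_subsequence_tending_to_zero_general T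
end

section
/- Let H be a separable infinite-dimensional complex Hilbert space and T : H → H a bounded linear operator. Then T satisfies the hypothesis of the Hypercyclicity Criterion if and only if there exists a strictly increasing sequence (n_k) of positive integers such that for every pair U, V of nonempty open subsets of H there is an index N ≥ 1 with T^{n_k}(U) ∩ V ≠ ∅ for every k ≥ N. -/
/-!
Forward direction: for `y ∈ Y` in `U` and `z ∈ Z` in `V`, the points `y + S_k z` lie in `U` and
are mapped into `V` by `T^{n_k}` for all large `k`.

Converse: a sequence of maps that is eventually transitive stays so on the countable power `X^ℕ`,
because a basic open set of the product constrains only finitely many coordinates and finitely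
many "eventually"s can be met at once. Baire's theorem in `X^ℕ` then gives a sequence `x` with
dense range such that `(0, 0, …)` is a cluster point of `(T^{n_k} x)_k`, and a diagonal
subsequence sends every `x_j` to `0`. For `S_k z` take a near-best approximation of `(0, z)` in
the graph of `T^{n_k}`.
-/

open Filter Topology Set Metric

section Topological

variable {X : Type*} [TopologicalSpace X]

def EventuallyTransitive (f : ℕ → X → X) : Prop :=
  ∀ U V : Set X, IsOpen U → IsOpen V → U.Nonempty → V.Nonempty →
    ∀ᶠ k in atTop, (f k '' U ∩ V).Nonempty

namespace EventuallyTransitive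

variable {f : ℕ → X → X}

theorem comp_strictMono (hf : EventuallyTransitive f) {φ : ℕ → ℕ} (hφ : StrictMono φ) :
    EventuallyTransitive (f ∘ φ) :=
  fun U V hU hV hUne hVne => hφ.tendsto_atTop.eventually (hf U V hU hV hUne hVne)

theorem pi (hf : EventuallyTransitive f) {ι : Type*} :
    EventuallyTransitive (fun k (x : ι → X) i => f k (x i)) := by
  rintro U V hU hV ⟨u, hu⟩ ⟨v, hv⟩
  obtain ⟨I, hI, s, hs, hsU⟩ := Filter.mem_pi.1 (nhds_pi (a := u) ▸ hU.mem_nhds hu)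
  obtain ⟨J, hJ, t, ht, htV⟩ := Filter.mem_pi.1 (nhds_pi (a := v) ▸ hV.mem_nhds hv)
  have hcoord : ∀ᶠ k in atTop, ∀ i ∈ I ∪ J, (interior (s i) ∩ f k ⁻¹' interior (t i)).Nonempty :=
    (eventually_all_finite (hI.union hJ)).2 fun i _ => by
      simpa only [← image_inter_nonempty_iff] using hf _ _ isOpen_interior isOpen_interior
        ⟨u i, mem_interior_iff_mem_nhds.2 (hs i)⟩ ⟨v i, mem_interior_iff_mem_nhds.2 (ht i)⟩
  filter_upwards [hcoord] with k hk
  classical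
  let w : ι → X := fun i => if h : i ∈ I ∪ J then (hk i h).some else u i
  have hw : ∀ i ∈ I ∪ J, w i ∈ interior (s i) ∩ f k ⁻¹' interior (t i) := fun i h => by
    simpa only [w, dif_pos h] using (hk i h).some_mem
  exact ⟨_, mem_image_of_mem _ (hsU fun i hi => interior_subset (hw i (.inl hi)).1),
    htV fun i hi => interior_subset (hw i (.inr hi)).2⟩

end EventuallyTransitive

theorem eventuallyTransitive_iff_exists_one_le {f : ℕ → X → X} :
    EventuallyTransitive f ↔ ∀ U V : Set X, IsOpen U → IsOpen V → U.Nonempty → V.Nonempty →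
      ∃ N : ℕ, 1 ≤ N ∧ ∀ k ≥ N, (f k '' U ∩ V).Nonempty := by
  simp only [EventuallyTransitive, (atTop_basis' 1).eventually_iff, mem_Ici, ge_iff_le]

theorem eventuallyTransitive_of_dense_tendsto {F : Type*} [AddZeroClass X] [ContinuousAdd X]
    [FunLike F X X] [AddHomClass F X X] {f : ℕ → F} {Y Z : Set X} {S : ℕ → X → X}
    (hY : Dense Y) (hZ : Dense Z) (hfY : ∀ y ∈ Y, Tendsto (fun k => f k y) atTop (𝓝 0))
    (hS : ∀ z ∈ Z, Tendsto (fun k => S k z) atTop (𝓝 0) ∧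
      Tendsto (fun k => f k (S k z)) atTop (𝓝 z)) :
    EventuallyTransitive fun k => ⇑(f k) := by
  intro U V hU hV hUne hVne
  obtain ⟨y, hyY, hyU⟩ := hY.exists_mem_open hU hUne
  obtain ⟨z, hzZ, hzV⟩ := hZ.exists_mem_open hV hVne
  obtain ⟨hSz, hfSz⟩ := hS z hzZ
  have hyS : Tendsto (fun k => y + S k z) atTop (𝓝 y) := by
    simpa using tendsto_const_nhds.add hSz
  have hTyS : Tendsto (fun k => f k (y + S k z)) atTop (𝓝 z) := by
    simpa [map_add] using (hfY y hyY).add hfSz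
  filter_upwards [hyS.eventually_mem (hU.mem_nhds hyU), hTyS.eventually_mem (hV.mem_nhds hzV)]
    with k hkU hkV
  exact ⟨_, mem_image_of_mem _ hkU, hkV⟩

theorem eventually_residual_frequently_mem {F : ℕ → X → X} (hcont : ∀ k, Continuous (F k))
    (hF : ∀ U V : Set X, IsOpen U → IsOpen V → U.Nonempty → V.Nonempty →
      ∃ᶠ k in atTop, (F k '' U ∩ V).Nonempty)
    {W : Set X} (hW : IsOpen W) (hWne : W.Nonempty) :
    ∀ᶠ x in residual X, ∃ᶠ k in atTop, F k x ∈ W := by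
  simp_rw [frequently_atTop]
  refine eventually_countable_forall.2 fun N => residual_of_dense_open ?_ ?_
  · have : {x | ∃ k ≥ N, F k x ∈ W} = ⋃ k ≥ N, F k ⁻¹' W := by ext; simp
    rw [this]
    exact isOpen_biUnion fun k _ => hW.preimage (hcont k)
  · refine dense_iff_inter_open.2 fun U hU hUne => ?_
    obtain ⟨k, hk, _, ⟨x, hx, rfl⟩, hxW⟩ := frequently_atTop.1 (hF U W hU hW hUne hWne) N
    exact ⟨x, hx, k, hk, hxW⟩

theorem eventually_residual_denseRange [SecondCountableTopology X] {ι : Type*} [Infinite ι] :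
    ∀ᶠ x in residual (ι → X), DenseRange x := by
  obtain ⟨B, hBc, -, hB⟩ := TopologicalSpace.exists_countable_basis X
  simp_rw [DenseRange, hB.dense_iff]
  refine (eventually_countable_ball hBc).2 fun o ho => ?_
  rcases o.eq_empty_or_nonempty with rfl | ⟨c, hc⟩
  · exact Eventually.of_forall fun _ h => absurd h not_nonempty_empty
  refine mem_of_superset (residual_of_dense_open (s := ⋃ j, (· j) ⁻¹' o)
    (isOpen_iUnion fun j => (hB.isOpen ho).preimage (continuous_apply j)) ?_) ?_
  · refine dense_iff_inter_open.2 fun U hU ⟨u, hu⟩ => ?_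
    obtain ⟨I, hI, s, hs, hsU⟩ := Filter.mem_pi.1 (nhds_pi (a := u) ▸ hU.mem_nhds hu)
    obtain ⟨j, hj⟩ := hI.infinite_compl.nonempty
    classical
    refine ⟨Function.update u j c, hsU fun i hi => ?_, mem_iUnion.2 ⟨j, by simpa using hc⟩⟩
    rw [Function.update_of_ne (ne_of_mem_of_not_mem hi hj)]
    exact mem_of_mem_nhds (hs i)
  · rintro x hx -
    obtain ⟨j, hj⟩ := mem_iUnion.1 hx
    exact ⟨x j, hj, mem_range_self j⟩

end Topological

section PseudoMetric

variable {X : Type*} [PseudoMetricSpace X]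

theorem exists_tendsto_apply_of_forall_eventually_exists {α : Type*} {g : ℕ → α → X} {p : X}
    (h : ∀ ε > 0, ∀ᶠ k in atTop, ∃ a, dist (g k a) p < ε) :
    ∃ a : ℕ → α, Tendsto (fun k => g k (a k)) atTop (𝓝 p) := by
  have : Nonempty α := let ⟨_, a, _⟩ := (h 1 one_pos).exists; ⟨a⟩
  have hne : ∀ k, (range (g k)).Nonempty := fun k => range_nonempty _
  have hinf : Tendsto (fun k => infDist p (range (g k))) atTop (𝓝 0) := by
    refine tendsto_order.2 ⟨fun ε hε => Eventually.of_forall fun k => hε.trans_le infDist_nonneg,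
      fun ε hε => ?_⟩
    filter_upwards [h ε hε] with k ⟨a, ha⟩
    exact (infDist_lt_iff (hne k)).2 ⟨_, mem_range_self a, by rwa [dist_comm]⟩
  have hclose : ∀ k, ∃ a, dist (g k a) p < infDist p (range (g k)) + 1 / (k + 1) := fun k => by
    obtain ⟨_, ⟨a, rfl⟩, ha⟩ := (infDist_lt_iff (hne k)).1
      (lt_add_of_pos_right (infDist p (range (g k))) Nat.one_div_pos_of_nat)
    exact ⟨a, by rwa [dist_comm]⟩
  choose a ha using hclose
  refine ⟨a, tendsto_iff_dist_tendsto_zero.2 (squeeze_zero (fun _ => dist_nonneg)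
    (fun k => (ha k).le) ?_)⟩
  simpa using hinf.add tendsto_one_div_add_atTop_nhds_zero_nat

theorem EventuallyTransitive.exists_tendsto {f : ℕ → X → X} (hf : EventuallyTransitive f)
    (p q : X) : ∃ s : ℕ → X, Tendsto s atTop (𝓝 p) ∧ Tendsto (fun k => f k (s k)) atTop (𝓝 q) := by
  obtain ⟨s, hs⟩ := exists_tendsto_apply_of_forall_eventually_exists
    (g := fun k x => (x, f k x)) (p := (p, q)) fun ε hε => by
      filter_upwards [hf (ball p ε) (ball q ε) isOpen_ball isOpen_ball (nonempty_ball.2 hε)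
        (nonempty_ball.2 hε)] with k ⟨_, ⟨x, hx, rfl⟩, hfx⟩
      exact ⟨x, by rw [Prod.dist_eq]; exact max_lt hx hfx⟩
  exact ⟨s, hs.fst_nhds, hs.snd_nhds⟩

theorem EventuallyTransitive.exists_strictMono_denseRange_tendsto [CompleteSpace X]
    [TopologicalSpace.SeparableSpace X] {f : ℕ → X → X} (hcont : ∀ k, Continuous (f k))
    (hf : EventuallyTransitive f) (p : X) :
    ∃ φ : ℕ → ℕ, StrictMono φ ∧ ∃ x : ℕ → X, DenseRange x ∧
      ∀ j, Tendsto (fun k => f (φ k) (x j)) atTop (𝓝 p) := by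
  let W : ℕ → Set (ℕ → X) := fun i => (Iic i).pi fun _ => ball p (1 / (i + 1))
  have hW : ∀ i, IsOpen (W i) ∧ (W i).Nonempty := fun i =>
    ⟨isOpen_set_pi (finite_Iic i) fun _ _ => isOpen_ball,
      ⟨fun _ => p, fun _ _ => mem_ball_self Nat.one_div_pos_of_nat⟩⟩
  have hgood : ∀ᶠ x in residual (ℕ → X),
      DenseRange x ∧ ∀ i, ∃ᶠ k in atTop, (fun j => f k (x j)) ∈ W i :=
    eventually_residual_denseRange.and <| eventually_countable_forall.2 fun i =>
      eventually_residual_frequently_mem (F := fun k (x : ℕ → X) j => f k (x j))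
        (fun k => continuous_pi fun j => (hcont k).comp' (continuous_apply j))
        (fun U V hU hV hUne hVne => (hf.pi U V hU hV hUne hVne).frequently) (hW i).1 (hW i).2
  obtain ⟨x, hxd, hxW⟩ := (dense_of_mem_residual hgood).nonempty (h := ⟨fun _ => p⟩)
  obtain ⟨φ, hφ, hφW⟩ := extraction_forall_of_frequently hxW
  refine ⟨φ, hφ, x, hxd, fun j => tendsto_iff_dist_tendsto_zero.2 ?_⟩
  refine squeeze_zero' (Eventually.of_forall fun _ => dist_nonneg) ?_
    tendsto_one_div_add_atTop_nhds_zero_nat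
  filter_upwards [eventually_ge_atTop j] with k hk
  exact (hφW k j hk).le

end PseudoMetric

theorem criterion_iff_eventually_transitive_general
    {H : Type*} [NormedAddCommGroup H] [InnerProductSpace ℂ H]
    [CompleteSpace H] [TopologicalSpace.SeparableSpace H]
    (T : H →L[ℂ] H) :
    SatisfiesHypercyclicityCriterion T ↔
    ∃ n : ℕ → ℕ, StrictMono n ∧ (∀ k, 0 < n k) ∧
      ∀ U V : Set H, IsOpen U → IsOpen V → U.Nonempty → V.Nonempty →
        ∃ N : ℕ, 1 ≤ N ∧ ∀ k ≥ N, ((T ^ n k) '' U ∩ V).Nonempty := by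
  simp only [← eventuallyTransitive_iff_exists_one_le]
  constructor
  · rintro ⟨Y, Z, n, S, hY, hZ, hn, hpos, hTY, hTZ⟩
    exact ⟨n, hn, hpos, eventuallyTransitive_of_dense_tendsto hY hZ hTY hTZ⟩
  · rintro ⟨n, hn, hpos, hT⟩
    obtain ⟨φ, hφ, y, hy, hTy⟩ :=
      hT.exists_strictMono_denseRange_tendsto (fun k => (T ^ n k).continuous) 0
    choose S hS using fun z => (hT.comp_strictMono hφ).exists_tendsto 0 z
    exact ⟨range y, univ, n ∘ φ, fun k z => S z k, hy, dense_univ, hn.comp hφ, fun k => hpos _,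
      forall_mem_range.2 hTy, fun z _ => hS z⟩

/-- Proposition 2.12, (i) ⇔ (iii). -/
theorem criterion_iff_eventually_transitive
    {H : Type*} [NormedAddCommGroup H] [InnerProductSpace ℂ H]
    [CompleteSpace H] [TopologicalSpace.SeparableSpace H]
    (hdim : ¬ FiniteDimensional ℂ H)
    (T : H →L[ℂ] H) :
    SatisfiesHypercyclicityCriterion T ↔
    ∃ n : ℕ → ℕ, StrictMono n ∧ (∀ k, 0 < n k) ∧
      ∀ U V : Set H, IsOpen U → IsOpen V → U.Nonempty → V.Nonempty →
        ∃ N : ℕ, 1 ≤ N ∧ ∀ k ≥ N, ((T ^ n k) '' U ∩ V).Nonempty :=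
  criterion_iff_eventually_transitive_general T
end
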